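/- arXiv:2006.15614 — 6 statements merged into one kernel-verified Lean document; each statement's English description precedes it below -/
import Mathlib

section
/- Let k, x, ℓ be nonnegative integers with ℓ even, ℓ' = ℓ/2, and x ≥ ℓ'. Define F(x) = Σ_{i=x+k−ℓ'+1}^{2k} (x choose i)·((ℓ−x) choose (2k−i)). Then F(x) − F(x+1) = (x choose (x+1+k−ℓ'))·((ℓ−x−1) choose (k+ℓ'−x−1)) ≥ 0; in particular F is non-increasing for x ≥ ℓ'. -/
/-- Binomial coefficient on integers: `0` when the lower index is negative or
exceeds the upper index. -/
def ichoose (p q : ℤ) : ℤ :=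
  if q < 0 ∨ p < q then 0 else (p.toNat).choose q.toNat

/-- `F(x) = Σ_{i=x+k−ℓ/2+1}^{2k} (x choose i)·((ℓ−x) choose (2k−i))`. -/
def F (k ℓ x : ℕ) : ℤ :=
  ∑ i ∈ Finset.Icc (x + k - ℓ / 2 + 1) (2 * k),
    ichoose x i * ichoose ((ℓ : ℤ) - x) ((2 * k : ℤ) - i)

lemma ichoose_nonneg (p q : ℤ) : 0 ≤ ichoose p q := by
  unfold ichoose; split
  · exact le_refl 0
  · exact_mod_cast Nat.zero_le _

lemma ichoose_of_neg_right {p q : ℤ} (h : q < 0) : ichoose p q = 0 :=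
  if_pos (Or.inl h)

lemma ichoose_of_lt {p q : ℤ} (h : p < q) : ichoose p q = 0 :=
  if_pos (Or.inr h)

lemma ichoose_of_neg_left {p : ℤ} (q : ℤ) (h : p < 0) : ichoose p q = 0 := by
  rcases lt_or_ge q 0 with h' | h'
  · exact ichoose_of_neg_right h'
  · exact ichoose_of_lt (lt_of_lt_of_le h h')

lemma ichoose_natCast (n m : ℕ) : ichoose n m = n.choose m := by
  unfold ichoose
  rcases le_or_gt (m : ℤ) n with h | h
  · rw [if_neg (by omega), Int.toNat_natCast, Int.toNat_natCast]
  · rw [if_pos (Or.inr h), Nat.choose_eq_zero_of_lt (by exact_mod_cast h)]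
    simp

lemma ichoose_pascal {p : ℤ} (hp : 0 ≤ p) (q : ℤ) :
    ichoose (p + 1) q = ichoose p q + ichoose p (q - 1) := by
  obtain ⟨n, rfl⟩ := Int.eq_ofNat_of_zero_le hp
  rcases lt_or_ge q 0 with hq | hq
  · rw [ichoose_of_neg_right hq, ichoose_of_neg_right hq,
      ichoose_of_neg_right (show q - 1 < 0 by omega)]
    simp
  rcases eq_or_lt_of_le hq with hq0 | hq0
  · rw [← hq0]
    rw [ichoose_of_neg_right (show (0:ℤ) - 1 < 0 by omega)]
    rw [show ((n:ℤ) + 1) = ((n+1 : ℕ) : ℤ) by push_cast; ring,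
      show (0:ℤ) = ((0:ℕ):ℤ) by simp, ichoose_natCast, ichoose_natCast]
    simp
  · obtain ⟨m, rfl⟩ := Int.eq_ofNat_of_zero_le hq
    have hm : 1 ≤ m := by exact_mod_cast hq0
    rw [show ((n:ℤ) + 1) = ((n+1 : ℕ) : ℤ) by push_cast; ring,
      show ((m:ℤ) - 1) = ((m-1 : ℕ) : ℤ) by omega,
      ichoose_natCast, ichoose_natCast, ichoose_natCast]
    have : (n+1).choose m = n.choose (m-1) + n.choose m := by
      have h := Nat.choose_succ_succ n (m-1)
      rw [show (m-1).succ = m by omega] at h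
      exact h
    rw [this]; push_cast; ring

lemma telescope (g : ℤ → ℤ) (a : ℤ) (n : ℕ) :
    ∑ i ∈ Finset.Icc (a + 1) (a + n), (g i - g (i - 1)) = g (a + n) - g a := by
  induction n with
  | zero => simp
  | succ n ih =>
    have hins : Finset.Icc (a + 1) (a + (n+1 : ℕ)) =
        insert (a + (n:ℕ) + 1) (Finset.Icc (a + 1) (a + n)) := by
      ext i; simp only [Finset.mem_Icc, Finset.mem_insert]; push_cast; omega
    rw [hins, Finset.sum_insert (by simp only [Finset.mem_Icc]; push_cast; omega), ih]
    have h1 : a + (n:ℤ) + 1 - 1 = a + n := by ring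
    have h2 : a + ((n:ℕ)+1 : ℕ) = a + (n:ℤ) + 1 := by push_cast; ring
    rw [h1, h2]; ring

lemma map_Icc_cast (A B : ℕ) :
    (Finset.Icc A B).map Nat.castEmbedding = Finset.Icc (A : ℤ) (B : ℤ) := by
  ext j
  simp only [Finset.mem_map, Finset.mem_Icc, Nat.castEmbedding_apply]
  constructor
  · rintro ⟨i, ⟨h1, h2⟩, rfl⟩
    exact ⟨by exact_mod_cast h1, by exact_mod_cast h2⟩
  · rintro ⟨h1, h2⟩
    exact ⟨j.toNat, ⟨by omega, by omega⟩, by omega⟩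

lemma F_eq (k ℓ x : ℕ) (h : ℓ / 2 ≤ x) :
    F k ℓ x = ∑ i ∈ Finset.Icc ((x:ℤ) + k - (ℓ/2 : ℕ) + 1) (2 * (k:ℤ)),
      ichoose x i * ichoose ((ℓ:ℤ) - x) (2 * k - i) := by
  rw [F]
  have hA : ((x + k - ℓ/2 + 1 : ℕ) : ℤ) = (x:ℤ) + k - (ℓ/2 : ℕ) + 1 := by omega
  have hB : (2 * (k:ℤ)) = ((2 * k : ℕ) : ℤ) := by push_cast; ring
  rw [hB, ← hA]
  have h2 := Finset.sum_map (Finset.Icc (x + k - ℓ/2 + 1) (2*k)) Nat.castEmbedding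
    (fun j : ℤ => ichoose x j * ichoose ((ℓ:ℤ) - x) (((2*k : ℕ) : ℤ) - j))
  rw [map_Icc_cast] at h2
  simp only [Nat.castEmbedding_apply] at h2
  rw [← h2]

theorem stmt_3 (k x ℓ : ℕ) (hℓ : Even ℓ) (hx : ℓ / 2 ≤ x) :
    F k ℓ x - F k ℓ (x + 1)
        = ichoose x ((x : ℤ) + 1 + k - (ℓ / 2 : ℕ)) *
            ichoose ((ℓ : ℤ) - x - 1) ((k : ℤ) + (ℓ / 2 : ℕ) - x - 1) ∧
      0 ≤ F k ℓ x - F k ℓ (x + 1) ∧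
      F k ℓ (x + 1) ≤ F k ℓ x := by
  obtain ⟨m, hm⟩ := hℓ
  set l' : ℕ := ℓ / 2 with hl'
  set a : ℤ := (x : ℤ) + k - l' + 1 with ha
  have hxZ : (l' : ℤ) ≤ x := by exact_mod_cast hx
  have hlZ : (ℓ : ℤ) = 2 * l' := by omega
  have hF1 : F k ℓ x = ∑ i ∈ Finset.Icc a (2 * (k:ℤ)),
      ichoose x i * ichoose ((ℓ:ℤ) - x) (2 * k - i) := F_eq k ℓ x hx
  have hF2 : F k ℓ (x + 1) = ∑ i ∈ Finset.Icc (a + 1) (2 * (k:ℤ)),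
      ichoose ((x:ℤ) + 1) i * ichoose ((ℓ:ℤ) - x - 1) (2 * k - i) := by
    rw [F_eq k ℓ (x+1) (by omega)]
    rw [show ((x + 1 : ℕ) : ℤ) + k - l' + 1 = a + 1 by push_cast [ha]; ring]
    refine Finset.sum_congr rfl fun i _ => ?_
    rw [show ((ℓ:ℤ) - ((x + 1 : ℕ) : ℤ)) = (ℓ:ℤ) - x - 1 by push_cast; ring,
      show (((x + 1 : ℕ)) : ℤ) = (x:ℤ) + 1 by push_cast; ring]
  have key : F k ℓ x - F k ℓ (x + 1)
      = ichoose x ((x : ℤ) + 1 + k - l') * ichoose ((ℓ : ℤ) - x - 1) ((k : ℤ) + l' - x - 1) := by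
    rcases lt_or_ge (2 * (k:ℤ)) a with hab | hab
    · rw [hF1, hF2, Finset.Icc_eq_empty (by omega), Finset.Icc_eq_empty (by omega),
        Finset.sum_empty, Finset.sum_empty,
        ichoose_of_neg_right (show (k:ℤ) + l' - x - 1 < 0 by omega)]
      ring
    · rcases lt_or_ge (x:ℤ) ℓ with hxl | hxl
      · -- main case: x < ℓ, telescoping
        set g : ℤ → ℤ := fun i => ichoose x i * ichoose ((ℓ:ℤ) - x - 1) (2 * k - 1 - i) with hg
        have hsplit : Finset.Icc a (2 * (k:ℤ)) = insert a (Finset.Icc (a + 1) (2 * (k:ℤ))) := by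
          ext i; simp only [Finset.mem_Icc, Finset.mem_insert]; omega
        rw [hF1, hF2, hsplit, Finset.sum_insert (by simp only [Finset.mem_Icc]; omega)]
        rw [add_sub_assoc, ← Finset.sum_sub_distrib]
        have hterm : ∀ i ∈ Finset.Icc (a + 1) (2 * (k:ℤ)),
            ichoose x i * ichoose ((ℓ:ℤ) - x) (2 * k - i)
              - ichoose ((x:ℤ) + 1) i * ichoose ((ℓ:ℤ) - x - 1) (2 * k - i)
            = g i - g (i - 1) := by
          intro i _
          rw [show ((ℓ:ℤ) - x) = ((ℓ:ℤ) - x - 1) + 1 by ring,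
            ichoose_pascal (show (0:ℤ) ≤ (ℓ:ℤ) - x - 1 by omega) (2 * k - i),
            ichoose_pascal (show (0:ℤ) ≤ (x:ℤ) by positivity) i]
          simp only [hg]
          rw [show 2 * (k:ℤ) - 1 - (i - 1) = 2 * k - i by ring,
            show 2 * (k:ℤ) - i - 1 = 2 * k - 1 - i by ring]
          ring
        rw [Finset.sum_congr rfl hterm]
        obtain ⟨n, hn⟩ : ∃ n : ℕ, 2 * (k:ℤ) = a + n := ⟨(2 * (k:ℤ) - a).toNat, by omega⟩
        rw [hn, telescope g a n, ← hn]
        have hg2k : g (2 * (k:ℤ)) = 0 := by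
          simp only [hg]
          rw [ichoose_of_neg_right (show 2 * (k:ℤ) - 1 - 2 * k < 0 by omega), mul_zero]
        rw [hg2k]
        simp only [hg]
        rw [show ((ℓ:ℤ) - x) = ((ℓ:ℤ) - x - 1) + 1 by ring,
          ichoose_pascal (show (0:ℤ) ≤ (ℓ:ℤ) - x - 1 by omega) (2 * k - a),
          show (x:ℤ) + 1 + k - l' = a by rw [ha]; ring,
          show (k:ℤ) + l' - x - 1 = 2 * k - a by rw [ha]; ring,
          show 2 * (k:ℤ) - 1 - a = 2 * k - a - 1 by ring]
        ring
      · -- degenerate case: ℓ ≤ x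
        have h1 : F k ℓ (x + 1) = 0 := by
          rw [hF2]
          refine Finset.sum_eq_zero fun i _ => ?_
          rw [ichoose_of_neg_left _ (show (ℓ:ℤ) - x - 1 < 0 by omega), mul_zero]
        have h2 : F k ℓ x = 0 := by
          rw [hF1]
          refine Finset.sum_eq_zero fun i hi => ?_
          simp only [Finset.mem_Icc] at hi
          rcases eq_or_lt_of_le hxl with heq | hlt
          · rcases eq_or_lt_of_le hi.2 with hieq | hilt
            · rw [hieq, ichoose_of_lt (show (x:ℤ) < 2 * k by omega), zero_mul]
            · rw [ichoose_of_lt (show (ℓ:ℤ) - x < 2 * k - i by omega), mul_zero]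
          · rw [ichoose_of_neg_left _ (show (ℓ:ℤ) - x < 0 by omega), mul_zero]
        rw [h1, h2, ichoose_of_neg_left _ (show (ℓ:ℤ) - x - 1 < 0 by omega), mul_zero, sub_zero]
  have hnn : 0 ≤ F k ℓ x - F k ℓ (x + 1) := by
    rw [key]; exact mul_nonneg (ichoose_nonneg _ _) (ichoose_nonneg _ _)
  exact ⟨key, hnn, by linarith⟩
end

section
/- Let P be a path with vertices v₁,…,vₙ and let L be a list assignment with |L(v₁)|, |L(vₙ)| ≥ 2m and |L(vᵢ)| = 4m for 2 ≤ i ≤ n−1. Define X₁ = L(v₁), Xᵢ = L(vᵢ) \ Xᵢ₋₁ for i ≥ 2, and S_L(P) = Σᵢ |Xᵢ|. Then P admits a 2m-fold L-coloring (an assignment of 2m-subsets φ(vᵢ) ⊆ L(vᵢ) with φ(vᵢ) ∩ φ(vᵢ₊₁) = ∅ for all i) if and only if S_L(P) ≥ 2nm. -/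
/-- The greedy sets: `X₁ = L(v₁)`, `Xᵢ = L(vᵢ) \ Xᵢ₋₁` (vertices indexed `1,…,n`). -/
def Xs (L : ℕ → Finset ℕ) : ℕ → Finset ℕ
  | 0 => ∅
  | i + 1 => L (i + 1) \ Xs L i

/-- `S_L(P) = Σ_{i=1}^n |Xᵢ|`. -/
def SL (L : ℕ → Finset ℕ) (n : ℕ) : ℕ := ∑ i ∈ Finset.Icc 1 n, (Xs L i).card

lemma SL_zero (L : ℕ → Finset ℕ) : SL L 0 = 0 := by simp [SL]

lemma SL_succ (L : ℕ → Finset ℕ) (n : ℕ) :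
    SL L (n + 1) = SL L n + (Xs L (n + 1)).card := by
  unfold SL
  rw [← Finset.insert_Icc_right_eq_Icc_add_one (by omega), Finset.sum_insert (by simp), add_comm]

lemma Xs_one (L : ℕ → Finset ℕ) : Xs L 1 = L 1 := by simp [Xs]

lemma Xs_congr {L L' : ℕ → Finset ℕ} :
    ∀ k, (∀ j, 1 ≤ j → j ≤ k → L' j = L j) → Xs L' k = Xs L k := by
  intro k
  induction k with
  | zero => intro _; rfl
  | succ p ih =>
    intro h
    show L' (p+1) \ Xs L' p = L (p+1) \ Xs L p
    rw [h (p+1) (by omega) le_rfl, ih (fun j h1 h2 => h j h1 (by omega))]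

lemma SL_congr {L L' : ℕ → Finset ℕ} (k : ℕ) (h : ∀ j, 1 ≤ j → j ≤ k → L' j = L j) :
    SL L' k = SL L k := by
  unfold SL
  apply Finset.sum_congr rfl
  intro i hi
  rw [Finset.mem_Icc] at hi
  exact congrArg Finset.card (Xs_congr i (fun j h1 h2 => h j h1 (le_trans h2 hi.2)))

lemma pair (L : ℕ → Finset ℕ) (k : ℕ) :
    (L (k+1)).card ≤ (Xs L k).card + (Xs L (k+1)).card := by
  have : (L (k+1)).card ≤ (L (k+1) \ Xs L k).card + (Xs L k).card :=
    Finset.card_le_card_sdiff_add_card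
  show _ ≤ _ + (L (k+1) \ Xs L k).card
  omega

lemma prefix_bound (m n : ℕ) (L : ℕ → Finset ℕ) (h1 : 2 * m ≤ (L 1).card)
    (hmid : ∀ i, 2 ≤ i → i ≤ n - 1 → (L i).card = 4 * m) :
    ∀ j, j ≤ n - 1 → 2 * j * m ≤ SL L j := by
  intro j
  induction j using Nat.strong_induction_on with
  | _ j ih =>
    match j with
    | 0 => intro _; simp [SL_zero]
    | 1 =>
      intro _
      have : SL L 1 = (Xs L 1).card := by rw [show (1:ℕ) = 0 + 1 from rfl, SL_succ, SL_zero]; omega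
      rw [this, Xs_one]
      omega
    | (k+2) =>
      intro hj
      have ihk := ih k (by omega) (by omega)
      have hp : (L (k+2)).card ≤ (Xs L (k+1)).card + (Xs L (k+2)).card := pair L (k+1)
      have hc : (L (k+2)).card = 4 * m := hmid (k+2) (by omega) hj
      have e5 : SL L (k+2) = SL L (k+1) + (Xs L (k+2)).card := SL_succ L (k+1)
      have e6 : SL L (k+1) = SL L k + (Xs L (k+1)).card := SL_succ L k
      have hr : 2 * (k+2) * m = 2 * k * m + 4 * m := by ring
      rw [hr]
      omega

lemma suff (m : ℕ) : ∀ n, ∀ L : ℕ → Finset ℕ, 1 ≤ n → 2 * m ≤ (L 1).card →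
    2 * m ≤ (L n).card →
    (∀ i, 2 ≤ i → i ≤ n - 1 → (L i).card = 4 * m) → 2 * n * m ≤ SL L n →
    ∃ φ : ℕ → Finset ℕ, (∀ i, 1 ≤ i → i ≤ n → φ i ⊆ L i ∧ (φ i).card = 2 * m) ∧
      (∀ i, 1 ≤ i → i + 1 ≤ n → Disjoint (φ i) (φ (i + 1))) := by
  intro n
  induction n using Nat.strong_induction_on with
  | _ n ih =>
  match n with
  | 0 => intro L h; omega
  | 1 =>
    intro L _ h1 _ _ _
    obtain ⟨F, hF, hFc⟩ := Finset.exists_subset_card_eq h1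
    refine ⟨fun _ => F, fun i hi1 hi2 => ?_, fun i hi1 hi2 => by omega⟩
    have : i = 1 := by omega
    subst this; exact ⟨hF, hFc⟩
  | (p+2) =>
    intro L hn h1 hlast hmid hSL
    have hpre : 2 * (p+1) * m ≤ SL L (p+1) :=
      prefix_bound m (p+2) L h1 hmid (p+1) (by omega)
    have hSL2 : SL L (p+2) = SL L (p+1) + (Xs L (p+2)).card := SL_succ L (p+1)
    -- choose F = φ (p+2)
    obtain ⟨F, hFsub, hFcard, hov⟩ :
        ∃ F, F ⊆ L (p+2) ∧ F.card = 2 * m ∧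
          (F ∩ Xs L (p+1)).card + 2 * (p+1) * m ≤ SL L (p+1) := by
      rcases le_or_gt (2 * m) ((Xs L (p+2)).card) with hbig | hsmall
      · obtain ⟨F, hF, hFc⟩ := Finset.exists_subset_card_eq hbig
        have hFL : F ⊆ L (p+2) := hF.trans (Finset.sdiff_subset)
        have hdisj : Disjoint F (Xs L (p+1)) :=
          Finset.disjoint_of_subset_left hF (Finset.sdiff_disjoint)
        have : (F ∩ Xs L (p+1)).card = 0 := by
          rw [Finset.disjoint_iff_inter_eq_empty.mp hdisj]; rfl
        exact ⟨F, hFL, hFc, by omega⟩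
      · obtain ⟨F, hXF, hFL, hFc⟩ :=
          Finset.exists_subsuperset_card_eq (t := L (p+2))
            (Finset.sdiff_subset : Xs L (p+2) ⊆ L (p+2)) (le_of_lt hsmall) hlast
        have hsub : F ∩ Xs L (p+1) ⊆ F \ Xs L (p+2) := by
          intro c hc
          rw [Finset.mem_inter] at hc
          rw [Finset.mem_sdiff]
          refine ⟨hc.1, fun hx => ?_⟩
          exact (Finset.mem_sdiff.mp hx).2 hc.2
        have hcard : (F \ Xs L (p+2)).card = F.card - (Xs L (p+2)).card :=
          Finset.card_sdiff_of_subset hXF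
        have hle := Finset.card_le_card hsub
        have hr : 2 * (p+2) * m = 2 * (p+1) * m + 2 * m := by ring
        rw [hr] at hSL
        exact ⟨F, hFL, hFc, by omega⟩
    set L' : ℕ → Finset ℕ := Function.update L (p+1) (L (p+1) \ F) with hL'
    have hL'eq : ∀ j, 1 ≤ j → j ≤ p → L' j = L j := by
      intro j _ hj
      exact Function.update_of_ne (by omega) _ _
    have hL'top : L' (p+1) = L (p+1) \ F := Function.update_self _ _ _
    have hX'top : Xs L' (p+1) = Xs L (p+1) \ F := by
      show L' (p+1) \ Xs L' p = (L (p+1) \ Xs L p) \ F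
      rw [hL'top, Xs_congr p hL'eq, sdiff_right_comm]
    have hSL'eq : SL L' (p+1) = SL L p + (Xs L (p+1) \ F).card := by
      rw [SL_succ, SL_congr p hL'eq, hX'top]
    have hcsplit : (Xs L (p+1) \ F).card + (F ∩ Xs L (p+1)).card = (Xs L (p+1)).card := by
      rw [Finset.inter_comm, Finset.card_sdiff_add_card_inter]
    have hSL1 : SL L (p+1) = SL L p + (Xs L (p+1)).card := SL_succ L p
    have hSLge : 2 * (p+1) * m ≤ SL L' (p+1) := by omega
    have hlast' : 2 * m ≤ (L' (p+1)).card := by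
      rcases Nat.eq_zero_or_pos p with rfl | hp
      · have e1 : SL L' 1 = (Xs L' 1).card := by
          rw [show (1:ℕ) = 0 + 1 from rfl, SL_succ, SL_zero]; omega
        have e2 : Xs L' 1 = L' 1 := Xs_one L'
        have e3 : 2 * 1 * m = 2 * m := by ring
        rw [e3] at hSLge
        rw [← e2, ← e1]
        exact hSLge
      · have h4 : (L (p+1)).card = 4 * m := hmid (p+1) (by omega) (by omega)
        have := Finset.card_le_card_sdiff_add_card (s := L (p+1)) (t := F)
        rw [hL'top]
        omega
    have h1' : 2 * m ≤ (L' 1).card := by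
      rcases Nat.eq_zero_or_pos p with rfl | hp
      · exact hlast'
      · rw [hL'eq 1 le_rfl hp]; exact h1
    have hmid' : ∀ i, 2 ≤ i → i ≤ (p+1) - 1 → (L' i).card = 4 * m := by
      intro i h2 hi
      rw [hL'eq i (by omega) (by omega)]
      exact hmid i h2 (by omega)
    obtain ⟨φ', hφ'1, hφ'2⟩ := ih (p+1) (by omega) L' (by omega) h1' hlast' hmid' hSLge
    refine ⟨fun i => if i = p + 2 then F else φ' i, ?_, ?_⟩
    · intro i hi1 hi2
      by_cases hip : i = p + 2
      · subst hip; simp only [if_pos rfl]; exact ⟨hFsub, hFcard⟩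
      · simp only [if_neg hip]
        have hi' := hφ'1 i hi1 (by omega)
        have hLL : L' i ⊆ L i := by
          by_cases hi3 : i = p + 1
          · subst hi3; rw [hL'top]; exact Finset.sdiff_subset
          · rw [show L' i = L i from Function.update_of_ne hi3 _ _]
        exact ⟨hi'.1.trans hLL, hi'.2⟩
    · intro i hi1 hi2
      by_cases hip : i + 1 = p + 2
      · have hi : i = p + 1 := by omega
        subst hi
        simp only [if_pos hip, if_neg (show p + 1 ≠ p + 2 by omega)]
        have := (hφ'1 (p+1) (by omega) le_rfl).1
        rw [hL'top] at this
        exact Finset.disjoint_of_subset_left this (Finset.sdiff_disjoint)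
      · simp only [if_neg hip, if_neg (show i ≠ p + 2 by omega)]
        exact hφ'2 i hi1 (by omega)
-- necessity
lemma nec (m n : ℕ) (hn : 1 ≤ n) (L : ℕ → Finset ℕ) (φ : ℕ → Finset ℕ)
    (hφ : ∀ i, 1 ≤ i → i ≤ n → φ i ⊆ L i ∧ (φ i).card = 2 * m)
    (hd : ∀ i, 1 ≤ i → i + 1 ≤ n → Disjoint (φ i) (φ (i + 1))) :
    2 * n * m ≤ SL L n := by
  have claim : ∀ k, k + 1 ≤ n → (φ (k+1) \ Xs L (k+1)).card + 2 * k * m ≤ SL L k := by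
    intro k
    induction k with
    | zero =>
      intro h
      have h1 := (hφ 1 le_rfl h).1
      have : φ 1 \ Xs L 1 = ∅ := by
        rw [Xs_one]
        exact Finset.sdiff_eq_empty_iff_subset.mpr h1
      simp [this, SL_zero]
    | succ k ih =>
      intro h
      have ihk := ih (by omega)
      have hsub : φ (k+2) \ Xs L (k+2) ⊆ Xs L (k+1) \ φ (k+1) := by
        intro c hc
        rw [Finset.mem_sdiff] at hc ⊢
        obtain ⟨hc1, hc2⟩ := hc
        have hcL : c ∈ L (k+2) := (hφ (k+2) (by omega) h).1 hc1
        constructor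
        · by_contra hx
          exact hc2 (by show c ∈ L (k+2) \ Xs L (k+1); rw [Finset.mem_sdiff]; exact ⟨hcL, hx⟩)
        · intro hcφ
          exact (Finset.disjoint_left.mp (hd (k+1) (by omega) (by omega)) hcφ) hc1
      have e1 : (φ (k+2) \ Xs L (k+2)).card ≤ (Xs L (k+1) \ φ (k+1)).card :=
        Finset.card_le_card hsub
      have e2 : (Xs L (k+1) \ φ (k+1)).card + (Xs L (k+1) ∩ φ (k+1)).card = (Xs L (k+1)).card :=
        Finset.card_sdiff_add_card_inter _ _
      have e3 : (φ (k+1) ∩ Xs L (k+1)).card + (φ (k+1) \ Xs L (k+1)).card = 2 * m := by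
        rw [Finset.card_inter_add_card_sdiff]
        exact (hφ (k+1) (by omega) (by omega)).2
      have e4 : (Xs L (k+1) ∩ φ (k+1)).card = (φ (k+1) ∩ Xs L (k+1)).card := by
        rw [Finset.inter_comm]
      have e5 : SL L (k+1) = SL L k + (Xs L (k+1)).card := SL_succ L k
      have hr1 : 2 * (k+1) * m = 2 * k * m + 2 * m := by ring
      show (φ (k+2) \ Xs L (k+2)).card + 2 * (k+1) * m ≤ SL L (k+1)
      rw [hr1]
      omega
  obtain ⟨p, rfl⟩ : ∃ p, n = p + 1 := ⟨n - 1, by omega⟩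
  have c := claim p le_rfl
  have e3 : (φ (p+1) ∩ Xs L (p+1)).card + (φ (p+1) \ Xs L (p+1)).card = 2 * m := by
    rw [Finset.card_inter_add_card_sdiff]
    exact (hφ (p+1) (by omega) le_rfl).2
  have e6 : (φ (p+1) ∩ Xs L (p+1)).card ≤ (Xs L (p+1)).card :=
    Finset.card_le_card Finset.inter_subset_right
  have e5 : SL L (p+1) = SL L p + (Xs L (p+1)).card := SL_succ L p
  have hr1 : 2 * (p+1) * m = 2 * p * m + 2 * m := by ring
  rw [hr1]
  omega



theorem stmt_8 (n m : ℕ) (hn : 1 ≤ n) (L : ℕ → Finset ℕ)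
    (h1 : 2 * m ≤ (L 1).card) (hlast : 2 * m ≤ (L n).card)
    (hmid : ∀ i, 2 ≤ i → i ≤ n - 1 → (L i).card = 4 * m) :
    (∃ φ : ℕ → Finset ℕ,
        (∀ i, 1 ≤ i → i ≤ n → φ i ⊆ L i ∧ (φ i).card = 2 * m) ∧
        (∀ i, 1 ≤ i → i + 1 ≤ n → Disjoint (φ i) (φ (i + 1)))) ↔
      2 * n * m ≤ SL L n := by
  constructor
  · rintro ⟨φ, hφ1, hφ2⟩
    exact nec m n hn L φ hφ1 hφ2
  · intro hSL
    exact suff m n L hn h1 hlast hmid hSL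
end

section
/- Let W be a set of 4m colors partitioned into three subsets X, Y, Z with |X| = x, |Y| = y, |Z| = z (so x+y+z = 4m). Call a 2m-subset S ⊆ W 'bad' if, writing a = |S∩X|, b = |S∩Y|, we have 2a + b ≥ max(2x + y − 2m + 1, 2m + 1). Then the number of bad 2m-subsets of W is strictly less than (1/2)·(4m choose 2m), for every integer m ≥ 1. -/
set_option maxHeartbeats 1000000 in
lemma exists_ab_aux (m x y z : ℕ) (hm : 1 ≤ m) (h : x + y + z = 4*m) :
    ∃ a b : ℕ, a ≤ x ∧ b ≤ y ∧ a + b ≤ 2*m ∧ 2*m ≤ a + b + z ∧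
      2*(a:ℤ) + b < max (2*(x:ℤ)+y-2*m+1) (2*m+1) ∧
      2*(x:ℤ)+y - (2*a+b) < max (2*(x:ℤ)+y-2*m+1) (2*m+1) := by
  set t := max (2*m - z) (min (2*m + min x (2*m)) (2*x+y - 2*m)) with ht
  set s := max (max (2*m - z) ((t+1)/2)) (t - x) with hs
  refine ⟨t - s, 2*s - t, ?_, ?_, ?_, ?_, ?_, ?_⟩ <;> omega

theorem stmt_10 (m : ℕ) (hm : 1 ≤ m) (W X Y Z : Finset ℕ)
    (hW : W.card = 4 * m) (hunion : X ∪ Y ∪ Z = W)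
    (hXY : Disjoint X Y) (hXZ : Disjoint X Z) (hYZ : Disjoint Y Z) :
    ((((W.powersetCard (2 * m)).filter (fun S =>
        max ((2 * (X.card : ℤ) + (Y.card : ℤ)) - 2 * m + 1) ((2 * m : ℤ) + 1)
          ≤ 2 * ((S ∩ X).card : ℤ) + ((S ∩ Y).card : ℤ))).card : ℚ))
      < 1 / 2 * ((4 * m).choose (2 * m) : ℚ) := by
  classical
  have hXW : X ⊆ W := hunion ▸ (Finset.subset_union_left.trans Finset.subset_union_left)
  have hYW : Y ⊆ W := hunion ▸ (Finset.subset_union_right.trans Finset.subset_union_left)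
  have hZW : Z ⊆ W := hunion ▸ Finset.subset_union_right
  have hXYZ : Disjoint (X ∪ Y) Z := Finset.disjoint_union_left.mpr ⟨hXZ, hYZ⟩
  have hsum : X.card + Y.card + Z.card = 4 * m := by
    rw [← hW, ← hunion, Finset.card_union_of_disjoint hXYZ,
      Finset.card_union_of_disjoint hXY]
  set M : ℤ := max ((2 * (X.card : ℤ) + (Y.card : ℤ)) - 2 * m + 1) ((2 * m : ℤ) + 1) with hMdef
  set p : Finset ℕ → Prop :=
    fun S => M ≤ 2 * ((S ∩ X).card : ℤ) + ((S ∩ Y).card : ℤ) with hpdef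
  set P := W.powersetCard (2 * m) with hPdef
  -- complement facts
  have hcomplX : ∀ S : Finset ℕ, ((W \ S) ∩ X).card + (S ∩ X).card = X.card := by
    intro S
    have h1 : (W \ S) ∩ X = X \ S := by
      ext e; simp only [Finset.mem_inter, Finset.mem_sdiff]
      exact ⟨fun h => ⟨h.2, h.1.2⟩, fun h => ⟨⟨hXW h.1, h.2⟩, h.1⟩⟩
    rw [h1, Finset.inter_comm]
    exact Finset.card_sdiff_add_card_inter X S
  have hcomplY : ∀ S : Finset ℕ, ((W \ S) ∩ Y).card + (S ∩ Y).card = Y.card := by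
    intro S
    have h1 : (W \ S) ∩ Y = Y \ S := by
      ext e; simp only [Finset.mem_inter, Finset.mem_sdiff]
      exact ⟨fun h => ⟨h.2, h.1.2⟩, fun h => ⟨⟨hYW h.1, h.2⟩, h.1⟩⟩
    rw [h1, Finset.inter_comm]
    exact Finset.card_sdiff_add_card_inter Y S
  have hcomplP : ∀ S ∈ P, W \ S ∈ P := by
    intro S hS
    rw [hPdef, Finset.mem_powersetCard] at hS ⊢
    refine ⟨Finset.sdiff_subset, ?_⟩
    rw [Finset.card_sdiff_of_subset hS.1, hW, hS.2]; omega
  -- bad sets have good complements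
  have hbadgood : ∀ S ∈ P, p S → ¬ p (W \ S) := by
    intro S hS hpS
    have hSW : S ⊆ W := (Finset.mem_powersetCard.mp hS).1
    have hx := hcomplX S
    have hy := hcomplY S
    rw [hpdef] at hpS ⊢
    simp only at hpS ⊢
    have hM1 : (2 * (X.card : ℤ) + (Y.card : ℤ)) - 2 * m + 1 ≤ M := le_max_left _ _
    have hM2 : (2 * m : ℤ) + 1 ≤ M := le_max_right _ _
    push_cast [← hx, ← hy] at hpS ⊢
    omega
  -- construct witness S0 good with good complement
  obtain ⟨a, b, hax, hby, hab, habz, h1, h2⟩ := exists_ab_aux m X.card Y.card Z.card hm hsum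
  obtain ⟨A, hAX, hA⟩ := Finset.exists_subset_card_eq hax
  obtain ⟨B, hBY, hB⟩ := Finset.exists_subset_card_eq hby
  obtain ⟨C, hCZ, hC⟩ := Finset.exists_subset_card_eq (show 2*m - (a+b) ≤ Z.card by omega)
  set S0 := A ∪ B ∪ C with hS0def
  have hS0W : S0 ⊆ W := by
    rw [hS0def]
    exact Finset.union_subset (Finset.union_subset (hAX.trans hXW) (hBY.trans hYW)) (hCZ.trans hZW)
  have hdAB : Disjoint A B := hXY.mono hAX hBY
  have hdABC : Disjoint (A ∪ B) C := (hXYZ.mono (Finset.union_subset_union hAX hBY) hCZ)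
  have hS0card : S0.card = 2 * m := by
    rw [hS0def, Finset.card_union_of_disjoint hdABC, Finset.card_union_of_disjoint hdAB,
      hA, hB, hC]
    omega
  have hS0P : S0 ∈ P := Finset.mem_powersetCard.mpr ⟨hS0W, hS0card⟩
  have hS0X : S0 ∩ X = A := by
    ext e
    simp only [hS0def, Finset.mem_inter, Finset.mem_union]
    constructor
    · rintro ⟨(h | h) | h, hX⟩
      · exact h
      · exact absurd hX (Finset.disjoint_right.mp hXY (hBY h))
      · exact absurd hX (Finset.disjoint_right.mp hXZ (hCZ h))
    · intro h; exact ⟨Or.inl (Or.inl h), hAX h⟩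
  have hS0Y : S0 ∩ Y = B := by
    ext e
    simp only [hS0def, Finset.mem_inter, Finset.mem_union]
    constructor
    · rintro ⟨(h | h) | h, hY⟩
      · exact absurd hY (Finset.disjoint_left.mp hXY (hAX h))
      · exact h
      · exact absurd hY (Finset.disjoint_right.mp hYZ (hCZ h))
    · intro h; exact ⟨Or.inl (Or.inr h), hBY h⟩
  have hS0good : ¬ p S0 := by
    rw [hpdef]; simp only [hS0X, hS0Y, hA, hB]
    exact not_le.mpr h1
  have hS0cgood : ¬ p (W \ S0) := by
    have hx := hcomplX S0
    have hy := hcomplY S0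
    rw [hS0X, hA] at hx
    rw [hS0Y, hB] at hy
    rw [hpdef]
    simp only [not_le]
    have : (((W \ S0) ∩ X).card : ℤ) = X.card - a := by omega
    have h2' : (((W \ S0) ∩ Y).card : ℤ) = Y.card - b := by omega
    rw [this, h2']
    omega
  -- counting
  set Bad := P.filter p with hBadDef
  set Good := P.filter (fun S => ¬ p S) with hGoodDef
  have hS0Good : S0 ∈ Good := Finset.mem_filter.mpr ⟨hS0P, hS0good⟩
  have himg : Bad.image (fun S => W \ S) ⊆ Good.erase S0 := by
    intro T hT
    obtain ⟨S, hS, rfl⟩ := Finset.mem_image.mp hT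
    rw [hBadDef, Finset.mem_filter] at hS
    refine Finset.mem_erase.mpr ⟨?_, Finset.mem_filter.mpr ⟨hcomplP S hS.1, hbadgood S hS.1 hS.2⟩⟩
    intro hcont
    have hSW : S ⊆ W := (Finset.mem_powersetCard.mp hS.1).1
    have : S = W \ S0 := by rw [← hcont, Finset.sdiff_sdiff_eq_self hSW]
    rw [this] at hS
    exact hS0cgood hS.2
  have hinj : Set.InjOn (fun S => W \ S) Bad := by
    intro S₁ h₁ S₂ h₂ heq
    have hw1 : S₁ ⊆ W := (Finset.mem_powersetCard.mp (Finset.mem_filter.mp h₁).1).1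
    have hw2 : S₂ ⊆ W := (Finset.mem_powersetCard.mp (Finset.mem_filter.mp h₂).1).1
    have := congrArg (fun T => W \ T) heq
    simpa [Finset.sdiff_sdiff_eq_self hw1, Finset.sdiff_sdiff_eq_self hw2] using this
  have hcardBad : Bad.card ≤ Good.card - 1 := by
    calc Bad.card = (Bad.image (fun S => W \ S)).card :=
          (Finset.card_image_of_injOn hinj).symm
      _ ≤ (Good.erase S0).card := Finset.card_le_card himg
      _ = Good.card - 1 := Finset.card_erase_of_mem hS0Good
  have hGoodpos : 1 ≤ Good.card := Finset.card_pos.mpr ⟨S0, hS0Good⟩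
  have htotal : Bad.card + Good.card = P.card :=
    Finset.card_filter_add_card_filter_not (p := p)
  have hPcard : P.card = (4 * m).choose (2 * m) := by
    rw [hPdef, Finset.card_powersetCard, hW]
  have hkey : 2 * Bad.card < (4 * m).choose (2 * m) := by omega
  have hgoal : (Bad.card : ℚ) < 1 / 2 * ((4 * m).choose (2 * m) : ℚ) := by
    have : (2 * Bad.card : ℚ) < ((4 * m).choose (2 * m) : ℚ) := by exact_mod_cast hkey
    linarith
  exact hgoal
end

section
/- Let G be a graph consisting of two vertex-disjoint even cycles joined by a path, or two even cycles sharing exactly one vertex. Then for every positive integer m, G is (4m, 2m)-choosable: for every assignment L of lists of size 4m to the vertices of G, there exists an assignment φ of 2m-subsets φ(v) ⊆ L(v) such that φ(u) ∩ φ(v) = ∅ for every edge uv. -/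
/-- `G` is `(a,b)`-choosable: for every assignment of `a`-element lists of colours
there is a choice of `b`-element subsets with adjacent vertices disjoint. -/
def Choosable {V : Type} (G : SimpleGraph V) (a b : ℕ) : Prop :=
  ∀ L : V → Finset ℕ, (∀ v, (L v).card = a) →
    ∃ φ : V → Finset ℕ, (∀ v, φ v ⊆ L v) ∧ (∀ v, (φ v).card = b) ∧
      ∀ u v, G.Adj u v → Disjoint (φ u) (φ v)

/-- The vertices of the connecting path: `u 0 = 0` lies on the first cycle,
`u j = 2p + j - 1` for `1 ≤ j ≤ r`. -/
def pu (p j : ℕ) : ℕ := if j = 0 then 0 else 2 * p + j - 1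

/-- The vertices of the second cycle: its first vertex is the last vertex of the
connecting path, the others are new. -/
def cv (p r j : ℕ) : ℕ := if j = 0 then pu p r else 2 * p + r + j - 1

/-- Two even cycles, of lengths `2p` and `2q`, joined by a path of length `r`
(for `r = 0` the two cycles share exactly one vertex). -/
def twoCycles (p q r : ℕ) : SimpleGraph ℕ :=
  SimpleGraph.fromEdgeSet
    { e | (∃ i < 2 * p, e = s(i, (i + 1) % (2 * p))) ∨
          (∃ j < r, e = s(pu p j, pu p (j + 1))) ∨
          (∃ j < 2 * q, e = s(cv p r j, cv p r ((j + 1) % (2 * q)))) }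

open Finset

/-- Picking lemma. -/
lemma pick_subset (A B : Finset ℕ) (b : ℕ) (t : ℤ) (ht : 0 ≤ t)
    (hA : b ≤ A.card) (h : (b : ℤ) - t ≤ ((A \ B).card : ℤ)) :
    ∃ G ⊆ A, G.card = b ∧ ((G ∩ B).card : ℤ) ≤ t := by
  by_cases hc : b ≤ (A \ B).card
  · obtain ⟨G, hGsub, hGcard⟩ := (A \ B).exists_subset_card_eq hc
    refine ⟨G, hGsub.trans (sdiff_subset), hGcard, ?_⟩
    have hdisj : Disjoint G B := Finset.sdiff_disjoint.mono_left hGsub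
    have : G ∩ B = ∅ := Finset.disjoint_iff_inter_eq_empty.mp hdisj
    rw [this]
    simpa using ht
  · push_neg at hc
    have hsplit : (A \ B).card + (A ∩ B).card = A.card := by
      rw [Finset.card_sdiff_add_card_inter]
    have h2 : b - (A \ B).card ≤ (A ∩ B).card := by omega
    obtain ⟨C, hCsub, hCcard⟩ := (A ∩ B).exists_subset_card_eq h2
    refine ⟨(A \ B) ∪ C, ?_, ?_, ?_⟩
    · exact Finset.union_subset (sdiff_subset) (hCsub.trans Finset.inter_subset_left)
    · have hdisj : Disjoint (A \ B) C :=
        Finset.sdiff_disjoint.mono_right (hCsub.trans Finset.inter_subset_right)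
      rw [Finset.card_union_of_disjoint hdisj, hCcard]
      omega
    · have hs : ((A \ B) ∪ C) ∩ B ⊆ C := by
        intro x hx
        simp only [Finset.mem_inter, Finset.mem_union, Finset.mem_sdiff] at hx
        rcases hx with ⟨hx1 | hx1, hx2⟩
        · exact absurd hx2 hx1.2
        · exact hx1
      calc ((((A \ B) ∪ C) ∩ B).card : ℤ) ≤ (C.card : ℤ) := by exact_mod_cast Finset.card_le_card hs
        _ ≤ t := by omega

/-- The backward chain `M_{n-1-k}` with seed `T` at position `n-1`. -/
def chainD (n : ℕ) (L : ℕ → Finset ℕ) (T : Finset ℕ) : ℕ → Finset ℕ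
  | 0 => T
  | (k+1) => (L (n-1-k) \ chainD n L T k) ∩ L (n-2-k)

/-- The thresholds. -/
def tfun (m n : ℕ) (L : ℕ → Finset ℕ) (T : Finset ℕ) : ℕ → ℤ
  | 0 => 0
  | (k+1) => tfun m n L T k + (2*(m:ℤ) - ((chainD n L T k).card : ℤ))

variable {m n : ℕ} {L : ℕ → Finset ℕ} {T : Finset ℕ}

lemma chainD_subset (hT : T ⊆ L (n-1)) : ∀ k, chainD n L T k ⊆ L (n-1-k)
  | 0 => hT
  | (k+1) => by
      have h : n-1-(k+1) = n-2-k := by omega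
      rw [h, chainD]
      exact inter_subset_right

lemma chainD_card (hL : ∀ j, (L j).card = 4*m) (hT : T ⊆ L (n-1)) (k : ℕ) :
    (chainD n L T (k+1)).card + (chainD n L T k).card ≤ 4*m := by
  have h1 : chainD n L T (k+1) ⊆ L (n-1-k) \ chainD n L T k := by
    rw [chainD]; exact inter_subset_left
  have h2 := Finset.card_le_card h1
  have h3 : (L (n-1-k) \ chainD n L T k).card = (L (n-1-k)).card - (chainD n L T k).card :=
    Finset.card_sdiff_of_subset (chainD_subset hT k)
  have h4 := Finset.card_le_card (chainD_subset hT k)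
  rw [hL] at h3 h4
  omega

lemma tfun_nonneg (hL : ∀ j, (L j).card = 4*m) (hT : T ⊆ L (n-1)) (hTc : T.card ≤ 2*m) :
    ∀ k, 0 ≤ tfun m n L T k ∧ 0 ≤ tfun m n L T (k+1)
  | 0 => by
      refine ⟨le_refl 0, ?_⟩
      show (0:ℤ) ≤ 0 + (2*(m:ℤ) - ((chainD n L T 0).card : ℤ))
      have h : ((chainD n L T 0).card : ℤ) ≤ 2*(m:ℤ) := by exact_mod_cast hTc
      omega
  | (k+1) => by
      obtain ⟨h1, h2⟩ := tfun_nonneg hL hT hTc k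
      refine ⟨h2, ?_⟩
      have hc := chainD_card hL hT (k := k) (m := m)
      show (0:ℤ) ≤ tfun m n L T (k+1) + (2*(m:ℤ) - ((chainD n L T (k+1)).card : ℤ))
      have e1 : tfun m n L T (k+1) = tfun m n L T k + (2*(m:ℤ) - ((chainD n L T k).card : ℤ)) := rfl
      have h5 : ((chainD n L T (k+1)).card : ℤ) + ((chainD n L T k).card : ℤ) ≤ 4*(m:ℤ) := by
        exact_mod_cast hc
      omega

/-- Pointwise linearity of the chain. -/
lemma chainD_pointwise (x : ℕ) : ∀ k, (x ∈ chainD n L T k ↔ x ∈ chainD n L (T ∩ {x}) k)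
  | 0 => by simp [chainD]
  | (k+1) => by
      simp only [chainD, Finset.mem_inter, Finset.mem_sdiff]
      have h := chainD_pointwise x k
      tauto

/-- The extension lemma. -/
lemma chain_ext (hL : ∀ j, (L j).card = 4*m) (S : Finset ℕ) (hS : S.card = 2*m)
    (hseed : T = S ∩ L (n-1)) :
    ∀ k, k ≤ n-2 → ∀ F, F ⊆ L (n-1-k) → F.card = 2*m →
      ((F ∩ chainD n L T k).card : ℤ) ≤ tfun m n L T k →
      ∃ φ : ℕ → Finset ℕ, φ (n-1-k) = F ∧
        (∀ j, n-1-k ≤ j → j < n → φ j ⊆ L j ∧ (φ j).card = 2*m) ∧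
        (∀ j, n-1-k ≤ j → j+1 < n → Disjoint (φ j) (φ (j+1))) ∧
        Disjoint (φ (n-1)) S := by
  have hT : T ⊆ L (n-1) := by rw [hseed]; exact inter_subset_right
  have hTc : T.card ≤ 2*m := by
    rw [hseed]
    calc (S ∩ L (n-1)).card ≤ S.card := Finset.card_le_card inter_subset_left
      _ = 2*m := hS
  intro k
  induction k with
  | zero =>
    intro _ F hFsub hFcard hFchain
    refine ⟨fun _ => F, rfl, ?_, ?_, ?_⟩
    · intro j hj1 hj2
      have hj : j = n-1 := by omega
      subst hj
      exact ⟨by simpa using hFsub, hFcard⟩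
    · intro j hj1 hj2; omega
    · have h0 : tfun m n L T 0 = 0 := rfl
      rw [h0] at hFchain
      have hemp : F ∩ T = ∅ := by
        apply Finset.card_eq_zero.mp
        have h1 : (0:ℤ) ≤ ((F ∩ chainD n L T 0).card : ℤ) := by positivity
        have h2 : ((F ∩ chainD n L T 0).card : ℤ) = 0 := le_antisymm hFchain h1
        exact_mod_cast h2
      rw [Finset.disjoint_iff_inter_eq_empty]
      rw [hseed] at hemp
      ext x
      simp only [Finset.mem_inter, Finset.notMem_empty, iff_false, not_and]
      intro hxF hxS
      have hxL : x ∈ L (n-1) := by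
        have := hFsub hxF; simpa using this
      have hx : x ∈ F ∩ (S ∩ L (n-1)) := by simp [hxF, hxS, hxL]
      rw [hemp] at hx
      exact absurd hx (Finset.notMem_empty x)
  | succ k ih =>
    intro hk F hFsub hFcard hFchain
    have hk' : k ≤ n - 2 := by omega
    have hFsub' : F ⊆ L (n-2-k) := by
      have h : n-1-(k+1) = n-2-k := by omega
      rwa [h] at hFsub
    -- pick G at level k
    have hDsub := chainD_subset (n := n) (L := L) hT k
    have hcardL : (L (n-1-k)).card = 4*m := hL _
    have hA : 2*m ≤ (L (n-1-k) \ F).card := by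
      have h1 : (L (n-1-k)).card - F.card ≤ (L (n-1-k) \ F).card := le_card_sdiff _ _
      omega
    have hkey : (2*(m:ℤ)) - tfun m n L T k ≤ (((L (n-1-k) \ F) \ chainD n L T k).card : ℤ) := by
      have e1 : (L (n-1-k) \ F) \ chainD n L T k = (L (n-1-k) \ chainD n L T k) \ F := by
        ext x; simp only [Finset.mem_sdiff]; tauto
      have hsub2 : (L (n-1-k) \ chainD n L T k) ∩ F ⊆ F ∩ chainD n L T (k+1) := by
        intro x hx
        simp only [Finset.mem_inter, Finset.mem_sdiff] at hx ⊢
        refine ⟨hx.2, ?_⟩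
        show x ∈ (L (n-1-k) \ chainD n L T k) ∩ L (n-2-k)
        simp only [Finset.mem_inter, Finset.mem_sdiff]
        exact ⟨hx.1, hFsub' hx.2⟩
      have hc2 : ((L (n-1-k) \ chainD n L T k) ∩ F).card ≤ (F ∩ chainD n L T (k+1)).card :=
        Finset.card_le_card hsub2
      have hc3 : ((L (n-1-k) \ chainD n L T k) \ F).card
          = (L (n-1-k) \ chainD n L T k).card - ((L (n-1-k) \ chainD n L T k) ∩ F).card := by
        have := Finset.card_sdiff_add_card_inter (L (n-1-k) \ chainD n L T k) F
        omega
      have hc4 : (L (n-1-k) \ chainD n L T k).card = 4*m - (chainD n L T k).card := by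
        rw [Finset.card_sdiff_of_subset hDsub, hcardL]
      have hc5 : (chainD n L T k).card ≤ 4*m := by
        have := Finset.card_le_card hDsub; omega
      have e2 : tfun m n L T (k+1) = tfun m n L T k + (2*(m:ℤ) - ((chainD n L T k).card : ℤ)) := rfl
      rw [e1]
      have hint : (((L (n-1-k) \ chainD n L T k) ∩ F).card : ℤ) ≤ tfun m n L T (k+1) := by
        calc (((L (n-1-k) \ chainD n L T k) ∩ F).card : ℤ)
            ≤ ((F ∩ chainD n L T (k+1)).card : ℤ) := by exact_mod_cast hc2
          _ ≤ tfun m n L T (k+1) := hFchain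
      have hc3' : (((L (n-1-k) \ chainD n L T k) \ F).card : ℤ)
          = ((L (n-1-k) \ chainD n L T k).card : ℤ) - (((L (n-1-k) \ chainD n L T k) ∩ F).card : ℤ) := by
        rw [hc3]
        have : ((L (n-1-k) \ chainD n L T k) ∩ F).card ≤ (L (n-1-k) \ chainD n L T k).card :=
          Finset.card_le_card inter_subset_left
        push_cast [Nat.cast_sub this]
        ring
      have hc4' : ((L (n-1-k) \ chainD n L T k).card : ℤ) = 4*(m:ℤ) - ((chainD n L T k).card : ℤ) := by
        rw [hc4]
        push_cast [Nat.cast_sub hc5]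
        ring
      omega
    obtain ⟨G, hGsub, hGcard, hGchain⟩ :=
      pick_subset (L (n-1-k) \ F) (chainD n L T k) (2*m) (tfun m n L T k)
        (tfun_nonneg hL hT hTc k).1 hA hkey
    have hGsubL : G ⊆ L (n-1-k) := hGsub.trans sdiff_subset
    obtain ⟨φ', hφ'val, hφ'props, hφ'disj, hφ'S⟩ := ih hk' G hGsubL hGcard hGchain
    refine ⟨Function.update φ' (n-2-k) F, ?_, ?_, ?_, ?_⟩
    · have h : n-1-(k+1) = n-2-k := by omega
      rw [h, Function.update_self]
    · intro j hj1 hj2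
      by_cases hje : j = n-2-k
      · subst hje
        rw [Function.update_self]
        exact ⟨hFsub', hFcard⟩
      · rw [Function.update_of_ne hje]
        apply hφ'props
        · omega
        · exact hj2
    · intro j hj1 hj2
      by_cases hje : j = n-2-k
      · subst hje
        rw [Function.update_self]
        have hne : n-2-k + 1 ≠ n-2-k := by omega
        rw [Function.update_of_ne hne]
        have he : n-2-k+1 = n-1-k := by omega
        rw [he, hφ'val]
        have : Disjoint G F := Finset.sdiff_disjoint.mono_left hGsub
        exact this.symm
      · rw [Function.update_of_ne hje, Function.update_of_ne (by omega : j+1 ≠ n-2-k)]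
        apply hφ'disj
        · omega
        · exact hj2
    · rw [Function.update_of_ne (by omega : n-1 ≠ n-2-k)]
      exact hφ'S

-- === new material ===

/-- Sum of chain cardinalities over all levels. -/
def Wsum (n : ℕ) (L : ℕ → Finset ℕ) (T : Finset ℕ) : ℤ :=
  ∑ k ∈ Finset.range (n-1), ((chainD n L T k).card : ℤ)

lemma tfun_eq {m n : ℕ} {L : ℕ → Finset ℕ} {T : Finset ℕ} :
    ∀ k, tfun m n L T k = 2*(m:ℤ)*k - ∑ k' ∈ Finset.range k, ((chainD n L T k').card : ℤ)
  | 0 => by simp [tfun]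
  | (k+1) => by
      rw [show tfun m n L T (k+1) = tfun m n L T k + (2*(m:ℤ) - ((chainD n L T k).card : ℤ)) from rfl,
        tfun_eq k, Finset.sum_range_succ]
      push_cast
      ring

/-- Main cycle-extension result from the counting condition. -/
lemma cycle_ext {m n : ℕ} {L : ℕ → Finset ℕ} (hL : ∀ j, (L j).card = 4*m) (hn : 4 ≤ n)
    (S : Finset ℕ) (hSsub : S ⊆ L 0) (hS : S.card = 2*m)
    (COND : Wsum n L (S ∩ L (n-1)) + (((S ∩ L 1).card : ℤ))
        - (((S ∩ chainD n L (S ∩ L (n-1)) (n-2)).card : ℤ)) ≤ 2*(m:ℤ)*((n:ℤ)-1)) :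
    ∃ φ : ℕ → Finset ℕ, φ 0 = S ∧ (∀ j, j < n → φ j ⊆ L j ∧ (φ j).card = 2*m) ∧
      (∀ j, j+1 < n → Disjoint (φ j) (φ (j+1))) ∧ Disjoint (φ (n-1)) S := by
  set T := S ∩ L (n-1) with hseed
  have hT : T ⊆ L (n-1) := inter_subset_right
  have hTc : T.card ≤ 2*m := by
    calc T.card ≤ S.card := Finset.card_le_card inter_subset_left
      _ = 2*m := hS
  set M1 := chainD n L T (n-2) with hM1
  have hM1sub : M1 ⊆ L 1 := by
    have := chainD_subset hT (n-2)
    rwa [show n-1-(n-2) = 1 by omega] at this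
  -- cardinalities
  have hL1 : (L 1).card = 4*m := hL 1
  have hSL1 : (L 1 ∩ S).card ≤ 2*m := by
    calc (L 1 ∩ S).card ≤ S.card := Finset.card_le_card inter_subset_right
      _ = 2*m := hS
  have hA : 2*m ≤ (L 1 \ S).card := by
    have := Finset.card_sdiff_add_card_inter (L 1) S
    omega
  -- the key counting bound
  have htf : tfun m n L T (n-2)
      = 2*(m:ℤ)*((n:ℤ)-2) - (Wsum n L T - (M1.card : ℤ)) := by
    rw [tfun_eq (n-2), Wsum]
    rw [show n-1 = (n-2)+1 by omega, Finset.sum_range_succ]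
    have : ((n:ℤ)-2) = ((n-2 : ℕ) : ℤ) := by omega
    rw [this, hM1]
    ring
  have hunion : L 1 ∩ (S ∪ M1) = (L 1 ∩ S) ∪ M1 := by
    ext x
    simp only [Finset.mem_inter, Finset.mem_union]
    constructor
    · rintro ⟨h1, h2 | h2⟩
      · exact Or.inl ⟨h1, h2⟩
      · exact Or.inr h2
    · rintro (⟨h1, h2⟩ | h2)
      · exact ⟨h1, Or.inl h2⟩
      · exact ⟨hM1sub h2, Or.inr h2⟩
  have hucard : ((L 1 ∩ (S ∪ M1)).card : ℤ)
      = ((L 1 ∩ S).card : ℤ) + (M1.card : ℤ) - ((S ∩ M1).card : ℤ) := by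
    rw [hunion]
    have h1 : ((L 1 ∩ S) ∪ M1).card + ((L 1 ∩ S) ∩ M1).card = (L 1 ∩ S).card + M1.card :=
      Finset.card_union_add_card_inter _ _
    have h2 : (L 1 ∩ S) ∩ M1 = S ∩ M1 := by
      ext x
      simp only [Finset.mem_inter]
      constructor
      · rintro ⟨⟨_, h⟩, h'⟩; exact ⟨h, h'⟩
      · rintro ⟨h, h'⟩; exact ⟨⟨hM1sub h', h⟩, h'⟩
    rw [h2] at h1
    push_cast
    omega
  have hsd : (L 1 \ S) \ M1 = L 1 \ (S ∪ M1) := by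
    ext x; simp only [Finset.mem_sdiff, Finset.mem_union]; tauto
  have hsdcard : ((L 1 \ (S ∪ M1)).card : ℤ) = 4*(m:ℤ) - ((L 1 ∩ (S ∪ M1)).card : ℤ) := by
    have h1 : (L 1 \ (S ∪ M1)).card + (L 1 ∩ (S ∪ M1)).card = (L 1).card :=
      Finset.card_sdiff_add_card_inter _ _
    rw [hL1] at h1
    push_cast
    omega
  have hScomm : ((L 1 ∩ S).card : ℤ) = ((S ∩ L 1).card : ℤ) := by rw [Finset.inter_comm]
  have hkey : (2*(m:ℤ)) - tfun m n L T (n-2) ≤ (((L 1 \ S) \ M1).card : ℤ) := by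
    rw [hsd, hsdcard, hucard, htf, hScomm]
    have hdh : 2*(m:ℤ)*((n:ℤ)-1) = 2*(m:ℤ)*((n:ℤ)-2) + 2*m := by ring
    have := COND
    omega
  obtain ⟨F, hFsub, hFcard, hFchain⟩ :=
    pick_subset (L 1 \ S) M1 (2*m) (tfun m n L T (n-2))
      (tfun_nonneg hL hT hTc (n-2)).1 hA hkey
  have hFL1 : F ⊆ L (n-1-(n-2)) := by
    rw [show n-1-(n-2) = 1 by omega]
    exact hFsub.trans sdiff_subset
  obtain ⟨φ', hφ'val, hφ'props, hφ'disj, hφ'S⟩ :=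
    chain_ext hL S hS hseed (n-2) (le_refl _) F hFL1 hFcard hFchain
  rw [show n-1-(n-2) = 1 by omega] at hφ'val hφ'props hφ'disj
  refine ⟨Function.update φ' 0 S, Function.update_self _ _ _, ?_, ?_, ?_⟩
  · intro j hj
    by_cases hj0 : j = 0
    · subst hj0; rw [Function.update_self]; exact ⟨hSsub, hS⟩
    · rw [Function.update_of_ne hj0]
      exact hφ'props j (by omega) hj
  · intro j hj
    by_cases hj0 : j = 0
    · subst hj0
      have e1 : Function.update φ' 0 S 0 = S := Function.update_self _ _ _
      have e2 : Function.update φ' 0 S (0+1) = φ' 1 :=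
        Function.update_of_ne (show (0+1:ℕ) ≠ 0 by omega) S φ'
      rw [e1, e2, hφ'val]
      exact (Finset.sdiff_disjoint.mono_left hFsub).symm
    · rw [Function.update_of_ne hj0, Function.update_of_ne (by omega)]
      exact hφ'disj j (by omega) hj
  · rw [Function.update_of_ne (by omega : n-1 ≠ 0)]
    exact hφ'S

-- === new ===

/-- seed for a single element -/
def seedx (n : ℕ) (L : ℕ → Finset ℕ) (x : ℕ) : Finset ℕ := {x} ∩ L (n-1)

/-- the per-element weight δ(x) -/
def deltaX (n : ℕ) (L : ℕ → Finset ℕ) (x : ℕ) : ℤ :=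
  (Wsum n L (seedx n L x) - Wsum n L ∅)
  + (if x ∈ L 1 then 1 else 0) - (if x ∈ chainD n L (seedx n L x) (n-2) then 1 else 0)

lemma seed_inter {S : Finset ℕ} {n : ℕ} {L : ℕ → Finset ℕ} {x : ℕ} (hx : x ∈ S) :
    (S ∩ L (n-1)) ∩ {x} = (seedx n L x) ∩ {x} := by
  ext y
  simp only [seedx, Finset.mem_inter, Finset.mem_singleton]
  constructor
  · rintro ⟨⟨_, h2⟩, rfl⟩; exact ⟨⟨rfl, h2⟩, rfl⟩
  · rintro ⟨⟨rfl, h2⟩, _⟩; exact ⟨⟨hx, h2⟩, rfl⟩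

lemma seed_empty {S : Finset ℕ} {n : ℕ} {L : ℕ → Finset ℕ} {x : ℕ} (hx : x ∉ S) :
    (S ∩ L (n-1)) ∩ {x} = (∅ : Finset ℕ) ∩ {x} := by
  ext y
  simp only [Finset.mem_inter, Finset.mem_singleton, Finset.notMem_empty, false_and, iff_false,
    not_and]
  rintro ⟨h1, _⟩ rfl
  exact hx h1

/-- membership in the `S`-chain, for `x ∈ S`, matches the single-element chain -/
lemma chain_mem_of_mem {S : Finset ℕ} {n : ℕ} {L : ℕ → Finset ℕ} {x : ℕ} (hx : x ∈ S) (k : ℕ) :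
    (x ∈ chainD n L (S ∩ L (n-1)) k ↔ x ∈ chainD n L (seedx n L x) k) := by
  rw [chainD_pointwise x k, seed_inter hx, ← chainD_pointwise x k]

lemma chain_mem_of_notMem {S : Finset ℕ} {n : ℕ} {L : ℕ → Finset ℕ} {x : ℕ} (hx : x ∉ S) (k : ℕ) :
    (x ∈ chainD n L (S ∩ L (n-1)) k ↔ x ∈ chainD n L ∅ k) := by
  rw [chainD_pointwise x k, seed_empty hx, ← chainD_pointwise x k]

/-- cardinality split of a chain level against `S`. -/
lemma chain_card_split {S : Finset ℕ} {n : ℕ} {L : ℕ → Finset ℕ} (k : ℕ) :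
    ((chainD n L (S ∩ L (n-1)) k).card : ℤ) - ((chainD n L ∅ k).card : ℤ)
      = ((S ∩ chainD n L (S ∩ L (n-1)) k).card : ℤ) - ((S ∩ chainD n L ∅ k).card : ℤ) := by
  have hdiff : chainD n L (S ∩ L (n-1)) k \ S = chainD n L ∅ k \ S := by
    ext y
    simp only [Finset.mem_sdiff]
    constructor
    · rintro ⟨h1, h2⟩; exact ⟨(chain_mem_of_notMem h2 k).mp h1, h2⟩
    · rintro ⟨h1, h2⟩; exact ⟨(chain_mem_of_notMem h2 k).mpr h1, h2⟩
  have e1 := Finset.card_inter_add_card_sdiff (chainD n L (S ∩ L (n-1)) k) S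
  have e2 := Finset.card_inter_add_card_sdiff (chainD n L ∅ k) S
  rw [Finset.inter_comm] at e1 e2
  rw [hdiff] at e1
  push_cast
  omega

/-- indicator sum over `S` of chain membership equals an intersection cardinality. -/
lemma sum_ind_chain {S : Finset ℕ} {n : ℕ} {L : ℕ → Finset ℕ} (k : ℕ) :
    (∑ x ∈ S, (if x ∈ chainD n L (seedx n L x) k then (1:ℤ) else 0))
      = ((S ∩ chainD n L (S ∩ L (n-1)) k).card : ℤ) := by
  rw [← Finset.filter_mem_eq_inter, Finset.card_filter]
  push_cast
  apply Finset.sum_congr rfl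
  intro x hx
  by_cases h : x ∈ chainD n L (seedx n L x) k
  · rw [if_pos h, if_pos ((chain_mem_of_mem hx k).mpr h)]
  · rw [if_neg h, if_neg (fun hc => h ((chain_mem_of_mem hx k).mp hc))]

lemma sum_ind_chain0 {S : Finset ℕ} {n : ℕ} {L : ℕ → Finset ℕ} (k : ℕ) :
    (∑ x ∈ S, (if x ∈ chainD n L ∅ k then (1:ℤ) else 0))
      = ((S ∩ chainD n L ∅ k).card : ℤ) := by
  rw [← Finset.filter_mem_eq_inter, Finset.card_filter]
  push_cast
  rfl

lemma card_sdiff_singleton (A : Finset ℕ) (x : ℕ) :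
    (A.card : ℤ) = ((A \ {x}).card : ℤ) + (if x ∈ A then 1 else 0) := by
  by_cases h : x ∈ A
  · rw [if_pos h]
    have hsub : ({x} : Finset ℕ) ⊆ A := Finset.singleton_subset_iff.mpr h
    rw [Finset.card_sdiff_of_subset hsub]
    have h1 : 1 ≤ A.card := Finset.card_le_card hsub
    rw [Finset.card_singleton] at *
    push_cast [Nat.cast_sub h1]
    ring
  · rw [if_neg h, Finset.sdiff_eq_self_iff_disjoint.mpr (by simpa using h)]
    ring

/-- per-element Wsum difference as indicator sums -/
lemma wsum_diff_eq (n : ℕ) (L : ℕ → Finset ℕ) (x : ℕ) :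
    Wsum n L (seedx n L x) - Wsum n L ∅
      = ∑ k ∈ Finset.range (n-1),
        ((if x ∈ chainD n L (seedx n L x) k then (1:ℤ) else 0)
          - (if x ∈ chainD n L ∅ k then (1:ℤ) else 0)) := by
  rw [Wsum, Wsum, ← Finset.sum_sub_distrib]
  apply Finset.sum_congr rfl
  intro k _
  have hsame : ∀ y, y ≠ x →
      (y ∈ chainD n L (seedx n L x) k ↔ y ∈ chainD n L ∅ k) := by
    intro y hy
    rw [chainD_pointwise y k, show seedx n L x ∩ {y} = (∅ : Finset ℕ) ∩ {y} by
      ext z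
      simp only [seedx, Finset.mem_inter, Finset.mem_singleton, Finset.notMem_empty,
        false_and, iff_false, not_and]
      rintro ⟨rfl, _⟩ rfl
      exact hy rfl, ← chainD_pointwise y k]
  have hsd : chainD n L (seedx n L x) k \ {x} = chainD n L ∅ k \ {x} := by
    ext y
    simp only [Finset.mem_sdiff, Finset.mem_singleton]
    constructor
    · rintro ⟨h1, h2⟩; exact ⟨(hsame y h2).mp h1, h2⟩
    · rintro ⟨h1, h2⟩; exact ⟨(hsame y h2).mpr h1, h2⟩
  have c1 := card_sdiff_singleton (chainD n L (seedx n L x) k) x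
  have c2 := card_sdiff_singleton (chainD n L ∅ k) x
  rw [hsd] at c1
  omega

/-- The expansion of the δ-sum. -/
lemma delta_sum_eq (S : Finset ℕ) (n : ℕ) (L : ℕ → Finset ℕ) :
    ∑ x ∈ S, deltaX n L x
      = (Wsum n L (S ∩ L (n-1)) - Wsum n L ∅) + ((S ∩ L 1).card : ℤ)
        - ((S ∩ chainD n L (S ∩ L (n-1)) (n-2)).card : ℤ) := by
  have e0 : ∀ x ∈ S, deltaX n L x
      = (Wsum n L (seedx n L x) - Wsum n L ∅)
        + ((if x ∈ L 1 then (1:ℤ) else 0)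
        - (if x ∈ chainD n L (seedx n L x) (n-2) then (1:ℤ) else 0)) := by
    intro x _; rw [deltaX]; ring
  rw [Finset.sum_congr rfl e0, Finset.sum_add_distrib]
  have e1 : ∑ x ∈ S, (Wsum n L (seedx n L x) - Wsum n L ∅)
      = Wsum n L (S ∩ L (n-1)) - Wsum n L ∅ := by
    have : ∀ x ∈ S, Wsum n L (seedx n L x) - Wsum n L ∅
        = ∑ k ∈ Finset.range (n-1),
          ((if x ∈ chainD n L (seedx n L x) k then (1:ℤ) else 0)
            - (if x ∈ chainD n L ∅ k then (1:ℤ) else 0)) := fun x _ => wsum_diff_eq n L x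
    rw [Finset.sum_congr rfl this, Finset.sum_comm]
    rw [Wsum, Wsum, ← Finset.sum_sub_distrib]
    apply Finset.sum_congr rfl
    intro k _
    rw [Finset.sum_sub_distrib, sum_ind_chain, sum_ind_chain0]
    rw [chain_card_split]
  have e2 : ∑ x ∈ S, (if x ∈ L 1 then (1:ℤ) else 0) = ((S ∩ L 1).card : ℤ) := by
    rw [← Finset.filter_mem_eq_inter, Finset.card_filter]
    push_cast
    rfl
  rw [e1, Finset.sum_sub_distrib, e2, sum_ind_chain]
  ring

-- ==== per-element bounds 0 ≤ δ ≤ 2 ====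

section DeltaBounds

variable {m n : ℕ} {L : ℕ → Finset ℕ}

lemma mem_chain_succ (T : Finset ℕ) (x k : ℕ) :
    x ∈ chainD n L T (k+1) ↔ (x ∈ L (n-1-k) ∧ x ∉ chainD n L T k ∧ x ∈ L (n-2-k)) := by
  simp only [chainD, Finset.mem_inter, Finset.mem_sdiff]
  tauto

/-- partial sums of indicator differences -/
def Ufun (n : ℕ) (L : ℕ → Finset ℕ) (x : ℕ) (k : ℕ) : ℤ :=
  ∑ k' ∈ Finset.range k,
    ((if x ∈ chainD n L (seedx n L x) k' then (1:ℤ) else 0)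
      - (if x ∈ chainD n L ∅ k' then (1:ℤ) else 0))

lemma Ufun_succ (x k : ℕ) : Ufun n L x (k+1) = Ufun n L x k
    + ((if x ∈ chainD n L (seedx n L x) k then (1:ℤ) else 0)
      - (if x ∈ chainD n L ∅ k then (1:ℤ) else 0)) := by
  rw [Ufun, Finset.sum_range_succ]; rfl

lemma chain_inv (x : ℕ) : ∀ k,
    ((x ∈ chainD n L (seedx n L x) k ↔ x ∈ chainD n L ∅ k)
        ∧ (Ufun n L x (k+1) = 0 ∨ Ufun n L x (k+1) = 1))
    ∨ (x ∈ chainD n L (seedx n L x) k ∧ x ∉ chainD n L ∅ k ∧ Ufun n L x (k+1) = 1)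
    ∨ (x ∉ chainD n L (seedx n L x) k ∧ x ∈ chainD n L ∅ k ∧ Ufun n L x (k+1) = 0) := by
  intro k
  induction k with
  | zero =>
    have hb : x ∉ chainD n L ∅ 0 := by simp [chainD]
    have hU : Ufun n L x 1 = (if x ∈ chainD n L (seedx n L x) 0 then (1:ℤ) else 0) := by
      rw [show (1:ℕ) = 0 + 1 from rfl, Ufun_succ]
      simp [Ufun, hb]
    by_cases ha : x ∈ chainD n L (seedx n L x) 0
    · exact Or.inr (Or.inl ⟨ha, hb, by rw [hU, if_pos ha]⟩)
    · exact Or.inl ⟨by tauto, Or.inl (by rw [hU, if_neg ha])⟩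
  | succ k ih =>
    have hrecA := mem_chain_succ (n := n) (L := L) (seedx n L x) x k
    have hrecB := mem_chain_succ (n := n) (L := L) (∅ : Finset ℕ) x k
    have hU := Ufun_succ (n := n) (L := L) x (k+1)
    rcases ih with ⟨hiff, hval⟩ | ⟨ha, hb, hval⟩ | ⟨ha, hb, hval⟩
    · -- merged
      have : (x ∈ chainD n L (seedx n L x) (k+1)) ↔ (x ∈ chainD n L ∅ (k+1)) := by
        rw [hrecA, hrecB]; tauto
      left
      refine ⟨this, ?_⟩
      have he : (if x ∈ chainD n L (seedx n L x) (k+1) then (1:ℤ) else 0)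
          = (if x ∈ chainD n L ∅ (k+1) then (1:ℤ) else 0) := by
        by_cases h : x ∈ chainD n L (seedx n L x) (k+1)
        · rw [if_pos h, if_pos (this.mp h)]
        · rw [if_neg h, if_neg (fun hc => h (this.mpr hc))]
      rw [Ufun_succ, he]
      omega
    · -- a ∧ ¬b, U = 1
      have hA1 : x ∉ chainD n L (seedx n L x) (k+1) := by
        rw [hrecA]; tauto
      by_cases hp : x ∈ L (n-1-k) ∧ x ∈ L (n-2-k)
      · have hB1 : x ∈ chainD n L ∅ (k+1) := by rw [hrecB]; tauto
        right; right
        refine ⟨hA1, hB1, ?_⟩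
        rw [Ufun_succ, if_neg hA1, if_pos hB1]
        omega
      · have hB1 : x ∉ chainD n L ∅ (k+1) := by rw [hrecB]; tauto
        left
        refine ⟨by tauto, ?_⟩
        rw [Ufun_succ, if_neg hA1, if_neg hB1]
        omega
    · -- ¬a ∧ b, U = 0
      have hB1 : x ∉ chainD n L ∅ (k+1) := by rw [hrecB]; tauto
      by_cases hp : x ∈ L (n-1-k) ∧ x ∈ L (n-2-k)
      · have hA1 : x ∈ chainD n L (seedx n L x) (k+1) := by rw [hrecA]; tauto
        right; left
        refine ⟨hA1, hB1, ?_⟩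
        rw [Ufun_succ, if_pos hA1, if_neg hB1]
        omega
      · have hA1 : x ∉ chainD n L (seedx n L x) (k+1) := by rw [hrecA]; tauto
        left
        refine ⟨by tauto, ?_⟩
        rw [Ufun_succ, if_neg hA1, if_neg hB1]
        omega

lemma delta_eq_U (hn : 4 ≤ n) (x : ℕ) :
    deltaX n L x = Ufun n L x (n-1)
      + (if x ∈ L 1 then (1:ℤ) else 0) - (if x ∈ chainD n L (seedx n L x) (n-2) then 1 else 0) := by
  rw [deltaX, wsum_diff_eq]
  rfl

lemma delta_bounds (hn : 4 ≤ n) (x : ℕ) :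
    0 ≤ deltaX n L x ∧ deltaX n L x ≤ 2 := by
  have hsubL : x ∈ chainD n L (seedx n L x) (n-2) → x ∈ L 1 := by
    intro h
    have hseed : seedx n L x ⊆ L (n-1) := Finset.inter_subset_right
    have := chainD_subset hseed (n-2) h
    rwa [show n-1-(n-2) = 1 by omega] at this
  have hU : Ufun n L x (n-1) = Ufun n L x ((n-2)+1) := by
    congr 1; omega
  have hinv := chain_inv (n := n) (L := L) x (n-2)
  rw [delta_eq_U hn x, hU]
  rcases hinv with ⟨hiff, hval⟩ | ⟨ha, hb, hval⟩ | ⟨ha, hb, hval⟩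
  · by_cases h : x ∈ chainD n L (seedx n L x) (n-2)
    · have hx1 : x ∈ L 1 := hsubL h
      rw [if_pos h, if_pos hx1]
      omega
    · rw [if_neg h]
      by_cases hx1 : x ∈ L 1
      · rw [if_pos hx1]; omega
      · rw [if_neg hx1]; omega
  · rw [if_pos ha, if_pos (hsubL ha), hval]
    omega
  · rw [if_neg ha, hval]
    by_cases hx1 : x ∈ L 1
    · rw [if_pos hx1]; omega
    · rw [if_neg hx1]; omega

end DeltaBounds

-- ==== pairing bounds: master inequality P and B ≥ 2m ====

section Pairing

variable {m n : ℕ} {L : ℕ → Finset ℕ}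

lemma pair_sum (hL : ∀ j, (L j).card = 4*m) {T : Finset ℕ} (hT : T ⊆ L (n-1)) :
    ∀ j, (∑ k ∈ Finset.range (2*j), (chainD n L T k).card) ≤ 4*m*j
  | 0 => by simp
  | (j+1) => by
      have h1 := pair_sum hL hT j
      have h2 := chainD_card (m := m) hL hT (2*j)
      rw [show 2*(j+1) = (2*j+1)+1 by ring, Finset.sum_range_succ, Finset.sum_range_succ]
      have : 4*m*(j+1) = 4*m*j + 4*m := by ring
      omega

lemma pair_sum' (hL : ∀ j, (L j).card = 4*m) {T : Finset ℕ} (hT : T ⊆ L (n-1)) :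
    ∀ j, (∑ k ∈ Finset.range (2*j), (chainD n L T (k+1)).card) ≤ 4*m*j
  | 0 => by simp
  | (j+1) => by
      have h1 := pair_sum' hL hT j
      have h2 := chainD_card (m := m) hL hT (2*j+1)
      rw [show 2*(j+1) = (2*j+1)+1 by ring, Finset.sum_range_succ, Finset.sum_range_succ]
      have : 4*m*(j+1) = 4*m*j + 4*m := by ring
      omega

/-- B ≥ 2m, i.e. `Wsum ∅ ≤ 2m(n-2)`. -/
lemma wsum_empty_le (hL : ∀ j, (L j).card = 4*m) (hn : 4 ≤ n) (heven : Even n) :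
    Wsum n L ∅ ≤ 2*(m:ℤ)*((n:ℤ)-2) := by
  obtain ⟨j, hj⟩ : ∃ j, n - 2 = 2*j := by
    obtain ⟨t, ht⟩ := heven
    exact ⟨t - 1, by omega⟩
  have hemp : (∅ : Finset ℕ) ⊆ L (n-1) := Finset.empty_subset _
  have h := pair_sum' (n := n) hL hemp j
  have hW : Wsum n L ∅ = ((∑ k ∈ Finset.range (n-2), (chainD n L ∅ (k+1)).card : ℕ) : ℤ) := by
    rw [Wsum, show n-1 = (n-2)+1 by omega]
    rw [Finset.sum_range_succ']
    have h0 : (chainD n L (∅ : Finset ℕ) 0).card = 0 := by simp [chainD]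
    push_cast [h0]
    ring
  rw [hW, hj]
  have : ((∑ k ∈ Finset.range (2*j), (chainD n L ∅ (k+1)).card : ℕ) : ℤ) ≤ ((4*m*j : ℕ) : ℤ) := by
    exact_mod_cast h
  have hnj : ((n:ℤ)-2) = 2*(j:ℤ) := by omega
  rw [hnj]
  push_cast at this ⊢
  nlinarith [this]

/-- The master inequality P. -/
lemma master_P (hL : ∀ j, (L j).card = 4*m) (hn : 4 ≤ n) (heven : Even n) :
    ∑ x ∈ L 0, deltaX n L x ≤ 2*(m:ℤ) + (2*(m:ℤ)*((n:ℤ)-1) - Wsum n L ∅) := by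
  rw [delta_sum_eq]
  set T0 := L 0 ∩ L (n-1) with hT0
  have hT : T0 ⊆ L (n-1) := Finset.inter_subset_right
  set M1 := chainD n L T0 (n-2) with hM1
  -- Wsum T0 ≤ 2m(n-2) + |M1|
  obtain ⟨j, hj⟩ : ∃ j, n - 2 = 2*j := by
    obtain ⟨t, ht⟩ := heven
    exact ⟨t - 1, by omega⟩
  have hpair := pair_sum (n := n) hL hT j
  have hWT : Wsum n L T0 = ((∑ k ∈ Finset.range (n-2), (chainD n L T0 k).card : ℕ) : ℤ)
      + (M1.card : ℤ) := by
    rw [Wsum, show n-1 = (n-2)+1 by omega, Finset.sum_range_succ, hM1]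
    push_cast
    ring
  have hWT2 : Wsum n L T0 ≤ 2*(m:ℤ)*((n:ℤ)-2) + (M1.card : ℤ) := by
    rw [hWT]
    have h1 : ((∑ k ∈ Finset.range (n-2), (chainD n L T0 k).card : ℕ) : ℤ) ≤ ((4*m*j : ℕ) : ℤ) := by
      rw [hj]; exact_mod_cast hpair
    have hnj : ((n:ℤ)-2) = 2*(j:ℤ) := by omega
    rw [hnj]
    push_cast at h1 ⊢
    nlinarith [h1]
  -- |M1| + |L0∩L1| − |L0∩M1| ≤ 4m
  have hM1L1 : M1 ⊆ L 1 := by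
    have := chainD_subset hT (n-2)
    rwa [show n-1-(n-2) = 1 by omega] at this
  have hkey : (M1.card : ℤ) + ((L 0 ∩ L 1).card : ℤ) - ((L 0 ∩ M1).card : ℤ) ≤ 4*(m:ℤ) := by
    have e1 : (M1 ∩ L 0).card + (M1 \ L 0).card = M1.card :=
      Finset.card_inter_add_card_sdiff _ _
    have e2 : M1 \ L 0 ⊆ L 1 \ L 0 := fun x hx => by
      simp only [Finset.mem_sdiff] at hx ⊢
      exact ⟨hM1L1 hx.1, hx.2⟩
    have e3 : (M1 \ L 0).card ≤ (L 1 \ L 0).card := Finset.card_le_card e2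
    have e4 : (L 1 \ L 0).card + (L 1 ∩ L 0).card = (L 1).card :=
      Finset.card_sdiff_add_card_inter _ _
    have e5 : (L 1).card = 4*m := hL 1
    have e6 : (L 0 ∩ M1).card = (M1 ∩ L 0).card := by rw [Finset.inter_comm]
    have e7 : (L 0 ∩ L 1).card = (L 1 ∩ L 0).card := by rw [Finset.inter_comm]
    push_cast
    omega
  have hL0card : ((L 0 ∩ L 1).card : ℤ) ≤ 4*(m:ℤ) := by
    have : (L 0 ∩ L 1).card ≤ (L 1).card := Finset.card_le_card Finset.inter_subset_right
    have h5 := hL 1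
    push_cast
    omega
  have : 2*(m:ℤ) + (2*(m:ℤ)*((n:ℤ)-1) - Wsum n L ∅)
      = (2*(m:ℤ)*((n:ℤ)-2) + 4*(m:ℤ)) - Wsum n L ∅ := by ring
  rw [this]
  omega

end Pairing

-- === new ===

section Counting

variable {m n : ℕ} {L : ℕ → Finset ℕ}

/-- extension follows from the δ-sum bound -/
lemma ext_of_delta (hL : ∀ j, (L j).card = 4*m) (hn : 4 ≤ n)
    (S : Finset ℕ) (hSsub : S ⊆ L 0) (hS : S.card = 2*m)
    (hsum : ∑ x ∈ S, deltaX n L x ≤ 2*(m:ℤ)*((n:ℤ)-1) - Wsum n L ∅) :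
    ∃ φ : ℕ → Finset ℕ, φ 0 = S ∧ (∀ j, j < n → φ j ⊆ L j ∧ (φ j).card = 2*m) ∧
      (∀ j, j+1 < n → Disjoint (φ j) (φ (j+1))) ∧ Disjoint (φ (n-1)) S := by
  apply cycle_ext hL hn S hSsub hS
  have := delta_sum_eq S n L
  omega

/-- sum of (δ-1) over a set A is at most (#δ=2 in A) - (#δ≤0 in A). -/
lemma sum_delta_sub_one_le (hn : 4 ≤ n) (A : Finset ℕ) :
    ∑ x ∈ A, (deltaX n L x - 1)
      ≤ ((A.filter (fun x => deltaX n L x = 2)).card : ℤ)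
        - ((A.filter (fun x => deltaX n L x ≤ 0)).card : ℤ) := by
  classical
  rw [← Finset.sum_filter_add_sum_filter_not A (fun x => deltaX n L x = 2)]
  have h1 : ∑ x ∈ A.filter (fun x => deltaX n L x = 2), (deltaX n L x - 1)
      = ((A.filter (fun x => deltaX n L x = 2)).card : ℤ) := by
    rw [Finset.sum_congr rfl (fun x hx => ?_)]
    · rw [Finset.sum_const, nsmul_eq_mul, mul_one]
    · rw [(Finset.mem_filter.mp hx).2]; norm_num
  rw [h1]
  have h2 : ∑ x ∈ A.filter (fun x => ¬ deltaX n L x = 2), (deltaX n L x - 1)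
      ≤ - ((A.filter (fun x => deltaX n L x ≤ 0)).card : ℤ) := by
    set B := A.filter (fun x => ¬ deltaX n L x = 2) with hB
    rw [← Finset.sum_filter_add_sum_filter_not B (fun x => deltaX n L x ≤ 0)]
    have e1 : B.filter (fun x => deltaX n L x ≤ 0) = A.filter (fun x => deltaX n L x ≤ 0) := by
      rw [hB, Finset.filter_filter]
      apply Finset.filter_congr
      intro x _
      constructor
      · rintro ⟨_, h⟩; exact h
      · intro h; exact ⟨by omega, h⟩
    have e2 : ∑ x ∈ B.filter (fun x => deltaX n L x ≤ 0), (deltaX n L x - 1)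
        ≤ - ((A.filter (fun x => deltaX n L x ≤ 0)).card : ℤ) := by
      rw [e1]
      have : ∀ x ∈ A.filter (fun x => deltaX n L x ≤ 0), deltaX n L x - 1 ≤ -1 := by
        intro x hx
        have := (Finset.mem_filter.mp hx).2
        omega
      calc ∑ x ∈ A.filter (fun x => deltaX n L x ≤ 0), (deltaX n L x - 1)
          ≤ ∑ _x ∈ A.filter (fun x => deltaX n L x ≤ 0), (-1 : ℤ) :=
            Finset.sum_le_sum this
        _ = - ((A.filter (fun x => deltaX n L x ≤ 0)).card : ℤ) := by
            rw [Finset.sum_const, nsmul_eq_mul]; ring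
    have e3 : ∑ x ∈ B.filter (fun x => ¬ deltaX n L x ≤ 0), (deltaX n L x - 1) ≤ 0 := by
      apply Finset.sum_nonpos
      intro x hx
      have hx2 := Finset.mem_filter.mp hx
      have hx3 := Finset.mem_filter.mp (Finset.mem_of_mem_filter x hx : x ∈ B)
      have := (delta_bounds (L := L) hn x).2
      have hne := hx3.2
      omega
    omega
  omega

/-- sum of (δ-1) over a set A is at least (#δ=2 in A) - (#δ≤0 in A). -/
lemma sum_delta_sub_one_ge (hn : 4 ≤ n) (A : Finset ℕ) :
    ((A.filter (fun x => deltaX n L x = 2)).card : ℤ)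
      - ((A.filter (fun x => deltaX n L x ≤ 0)).card : ℤ)
      ≤ ∑ x ∈ A, (deltaX n L x - 1) := by
  classical
  rw [← Finset.sum_filter_add_sum_filter_not A (fun x => deltaX n L x = 2)]
  have h1 : ∑ x ∈ A.filter (fun x => deltaX n L x = 2), (deltaX n L x - 1)
      = ((A.filter (fun x => deltaX n L x = 2)).card : ℤ) := by
    rw [Finset.sum_congr rfl (fun x hx => ?_)]
    · rw [Finset.sum_const, nsmul_eq_mul, mul_one]
    · rw [(Finset.mem_filter.mp hx).2]; norm_num
  rw [h1]
  have h2 : - ((A.filter (fun x => deltaX n L x ≤ 0)).card : ℤ)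
      ≤ ∑ x ∈ A.filter (fun x => ¬ deltaX n L x = 2), (deltaX n L x - 1) := by
    set B := A.filter (fun x => ¬ deltaX n L x = 2) with hB
    rw [← Finset.sum_filter_add_sum_filter_not B (fun x => deltaX n L x ≤ 0)]
    have e1 : B.filter (fun x => deltaX n L x ≤ 0) = A.filter (fun x => deltaX n L x ≤ 0) := by
      rw [hB, Finset.filter_filter]
      apply Finset.filter_congr
      intro x _
      constructor
      · rintro ⟨_, h⟩; exact h
      · intro h; exact ⟨by omega, h⟩
    have e2 : - ((A.filter (fun x => deltaX n L x ≤ 0)).card : ℤ)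
        ≤ ∑ x ∈ B.filter (fun x => deltaX n L x ≤ 0), (deltaX n L x - 1) := by
      rw [e1]
      have : ∀ x ∈ A.filter (fun x => deltaX n L x ≤ 0), (-1 : ℤ) ≤ deltaX n L x - 1 := by
        intro x hx
        have := (delta_bounds (L := L) hn x).1
        omega
      calc - ((A.filter (fun x => deltaX n L x ≤ 0)).card : ℤ)
          = ∑ _x ∈ A.filter (fun x => deltaX n L x ≤ 0), (-1 : ℤ) := by
            rw [Finset.sum_const, nsmul_eq_mul]; ring
        _ ≤ _ := Finset.sum_le_sum this
    have e3 : (0:ℤ) ≤ ∑ x ∈ B.filter (fun x => ¬ deltaX n L x ≤ 0), (deltaX n L x - 1) := by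
      apply Finset.sum_nonneg
      intro x hx
      have hx2 := (Finset.mem_filter.mp hx).2
      omega
    omega
  omega

lemma sum_delta_split (hn : 4 ≤ n) (A : Finset ℕ) :
    ∑ x ∈ A, deltaX n L x = (∑ x ∈ A, (deltaX n L x - 1)) + (A.card : ℤ) := by
  rw [Finset.sum_sub_distrib, Finset.sum_const, nsmul_eq_mul, mul_one]
  ring

end Counting

section MainCycle

variable {m n : ℕ} {L : ℕ → Finset ℕ}

/-- abbreviations for the three classes inside `L 0` -/
private def SPs (n : ℕ) (L : ℕ → Finset ℕ) : Finset ℕ := (L 0).filter (fun x => deltaX n L x = 2)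
private def ZRs (n : ℕ) (L : ℕ → Finset ℕ) : Finset ℕ := (L 0).filter (fun x => deltaX n L x ≤ 0)
private def ONs (n : ℕ) (L : ℕ → Finset ℕ) : Finset ℕ := (L 0).filter (fun x => deltaX n L x = 1)

lemma class_partition (hn : 4 ≤ n) :
    (SPs n L).card + (ZRs n L).card + (ONs n L).card = (L 0).card := by
  classical
  have h2 := Finset.card_filter_add_card_filter_not
    (s := L 0) (p := fun x => deltaX n L x = 2)
  have h3 := Finset.card_filter_add_card_filter_not
    (s := (L 0).filter (fun x => ¬ deltaX n L x = 2)) (p := fun x => deltaX n L x ≤ 0)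
  have e1 : ((L 0).filter (fun x => ¬ deltaX n L x = 2)).filter (fun x => deltaX n L x ≤ 0)
      = ZRs n L := by
    rw [Finset.filter_filter]
    apply Finset.filter_congr
    intro x _
    constructor
    · rintro ⟨_, h⟩; exact h
    · intro h; exact ⟨by omega, h⟩
  have e2 : ((L 0).filter (fun x => ¬ deltaX n L x = 2)).filter (fun x => ¬ deltaX n L x ≤ 0)
      = ONs n L := by
    rw [Finset.filter_filter]
    apply Finset.filter_congr
    intro x hx
    have hb := delta_bounds (L := L) hn x
    constructor
    · rintro ⟨h1, h2⟩; omega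
    · intro h; omega
  rw [e1, e2] at h3
  simp only [SPs, ZRs, ONs] at *
  omega

/-- the slack bound coming from the master inequality -/
lemma k_minus_n0 (hL : ∀ j, (L j).card = 4*m) (hn : 4 ≤ n) (heven : Even n) :
    ((SPs n L).card : ℤ) - ((ZRs n L).card : ℤ)
      ≤ (2*(m:ℤ)*((n:ℤ)-1) - Wsum n L ∅) - 2*m := by
  have hP := master_P hL hn heven
  have hge := sum_delta_sub_one_ge (L := L) hn (L 0)
  have hsplit := sum_delta_split (L := L) hn (L 0)
  have hc : ((L 0).card : ℤ) = 4*m := by exact_mod_cast hL 0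
  rw [hsplit, hc] at hP
  have : ((SPs n L).card : ℤ) - ((ZRs n L).card : ℤ)
      ≤ ∑ x ∈ L 0, (deltaX n L x - 1) := hge
  omega

lemma Bv_ge (hL : ∀ j, (L j).card = 4*m) (hn : 4 ≤ n) (heven : Even n) :
    2*(m:ℤ) ≤ 2*(m:ℤ)*((n:ℤ)-1) - Wsum n L ∅ := by
  have := wsum_empty_le hL hn heven
  have h2 : 2*(m:ℤ)*((n:ℤ)-1) = 2*(m:ℤ)*((n:ℤ)-2) + 2*m := by ring
  omega

/-- per-S sum bound -/
lemma sum_S_bound (hn : 4 ≤ n) (S : Finset ℕ) (hS : S.card = 2*m) :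
    ∑ x ∈ S, deltaX n L x ≤ 2*(m:ℤ)
      + ((S.filter (fun x => deltaX n L x = 2)).card : ℤ)
      - ((S.filter (fun x => deltaX n L x ≤ 0)).card : ℤ) := by
  have h1 := sum_delta_sub_one_le (L := L) hn S
  have h2 := sum_delta_split (L := L) hn S
  have hc : (S.card : ℤ) = 2*m := by exact_mod_cast hS
  omega

theorem cycle_avoid (hL : ∀ j, (L j).card = 4*m) (hn : 4 ≤ n) (heven : Even n) :
    ∃ Z, Z ⊆ L 0 ∧ Z.card ≤ m ∧ ∀ S, S ⊆ L 0 → S.card = 2*m → Disjoint S Z →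
      ∃ φ : ℕ → Finset ℕ, φ 0 = S ∧ (∀ j, j < n → φ j ⊆ L j ∧ (φ j).card = 2*m) ∧
        (∀ j, j+1 < n → Disjoint (φ j) (φ (j+1))) ∧ Disjoint (φ (n-1)) S := by
  classical
  by_cases hk : (SPs n L).card ≤ m
  · refine ⟨SPs n L, Finset.filter_subset _ _, hk, ?_⟩
    intro S hSsub hScard hdisj
    apply ext_of_delta hL hn S hSsub hScard
    have h1 := sum_S_bound (L := L) hn S hScard
    have hj : S.filter (fun x => deltaX n L x = 2) = ∅ := by
      rw [Finset.filter_eq_empty_iff]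
      intro x hx hxd
      have hxSP : x ∈ SPs n L := Finset.mem_filter.mpr ⟨hSsub hx, hxd⟩
      exact (Finset.disjoint_left.mp hdisj hx) hxSP
    rw [hj] at h1
    simp only [Finset.card_empty] at h1
    have hB := Bv_ge hL hn heven
    have hz : (0:ℤ) ≤ ((S.filter (fun x => deltaX n L x ≤ 0)).card : ℤ) := by positivity
    omega
  · push_neg at hk
    obtain ⟨Z, hZsub, hZcard⟩ := (SPs n L).exists_subset_card_eq (le_of_lt hk)
    refine ⟨Z, hZsub.trans (Finset.filter_subset _ _), le_of_eq hZcard, ?_⟩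
    intro S hSsub hScard hdisj
    apply ext_of_delta hL hn S hSsub hScard
    have h1 := sum_S_bound (L := L) hn S hScard
    -- j ≤ k - m
    have hjk : (S.filter (fun x => deltaX n L x = 2)).card ≤ (SPs n L).card - m := by
      have hsub : S.filter (fun x => deltaX n L x = 2) ⊆ SPs n L \ Z := by
        intro x hx
        obtain ⟨hxS, hxd⟩ := Finset.mem_filter.mp hx
        refine Finset.mem_sdiff.mpr ⟨Finset.mem_filter.mpr ⟨hSsub hxS, hxd⟩, ?_⟩
        exact Finset.disjoint_left.mp hdisj hxS
      have := Finset.card_le_card hsub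
      rw [Finset.card_sdiff_of_subset hZsub, hZcard] at this
      exact this
    -- partition of S
    have hpartS : (S.filter (fun x => deltaX n L x = 2)).card
        + (S.filter (fun x => deltaX n L x ≤ 0)).card
        + (S.filter (fun x => deltaX n L x = 1)).card = 2*m := by
      classical
      have h2 := Finset.card_filter_add_card_filter_not
        (s := S) (p := fun x => deltaX n L x = 2)
      have h3 := Finset.card_filter_add_card_filter_not
        (s := S.filter (fun x => ¬ deltaX n L x = 2)) (p := fun x => deltaX n L x ≤ 0)
      have e1 : (S.filter (fun x => ¬ deltaX n L x = 2)).filter (fun x => deltaX n L x ≤ 0)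
          = S.filter (fun x => deltaX n L x ≤ 0) := by
        rw [Finset.filter_filter]
        apply Finset.filter_congr
        intro x _
        constructor
        · rintro ⟨_, h⟩; exact h
        · intro h; exact ⟨by omega, h⟩
      have e2 : (S.filter (fun x => ¬ deltaX n L x = 2)).filter (fun x => ¬ deltaX n L x ≤ 0)
          = S.filter (fun x => deltaX n L x = 1) := by
        rw [Finset.filter_filter]
        apply Finset.filter_congr
        intro x hx
        have hb := delta_bounds (L := L) hn x
        constructor
        · rintro ⟨h1, h2⟩; omega
        · intro h; omega
      rw [e1, e2] at h3
      omega
    have hONsub : (S.filter (fun x => deltaX n L x = 1)).card ≤ (ONs n L).card := by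
      apply Finset.card_le_card
      intro x hx
      obtain ⟨hxS, hxd⟩ := Finset.mem_filter.mp hx
      exact Finset.mem_filter.mpr ⟨hSsub hxS, hxd⟩
    have hpart := class_partition (L := L) hn
    have hkn := k_minus_n0 hL hn heven
    have hc : (L 0).card = 4*m := hL 0
    rw [hc] at hpart
    -- now pure arithmetic
    have hBv := Bv_ge hL hn heven
    simp only [SPs, ZRs, ONs] at hpart hkn hjk hONsub
    push_cast at hpart hpartS hjk hONsub ⊢
    omega

theorem cycle_contain (hL : ∀ j, (L j).card = 4*m) (hn : 4 ≤ n) (heven : Even n) :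
    ∃ Z, Z ⊆ L 0 ∧ Z.card ≤ m ∧ ∀ S, S ⊆ L 0 → S.card = 2*m → Z ⊆ S →
      ∃ φ : ℕ → Finset ℕ, φ 0 = S ∧ (∀ j, j < n → φ j ⊆ L j ∧ (φ j).card = 2*m) ∧
        (∀ j, j+1 < n → Disjoint (φ j) (φ (j+1))) ∧ Disjoint (φ (n-1)) S := by
  classical
  by_cases hz : m ≤ (ZRs n L).card
  · obtain ⟨Z, hZsub, hZcard⟩ := (ZRs n L).exists_subset_card_eq hz
    refine ⟨Z, hZsub.trans (Finset.filter_subset _ _), le_of_eq hZcard, ?_⟩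
    intro S hSsub hScard hcont
    apply ext_of_delta hL hn S hSsub hScard
    have h1 := sum_S_bound (L := L) hn S hScard
    have hzS : m ≤ (S.filter (fun x => deltaX n L x ≤ 0)).card := by
      rw [← hZcard]
      apply Finset.card_le_card
      intro x hx
      have hxZR := hZsub hx
      exact Finset.mem_filter.mpr ⟨hcont hx, (Finset.mem_filter.mp hxZR).2⟩
    have hjz : (S.filter (fun x => deltaX n L x = 2)).card
        + (S.filter (fun x => deltaX n L x ≤ 0)).card ≤ 2*m := by
      rw [← hScard]
      rw [← Finset.card_union_of_disjoint]
      · apply Finset.card_le_card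
        apply Finset.union_subset <;> exact Finset.filter_subset _ _
      · rw [Finset.disjoint_filter]
        intro x _ h2
        omega
    have hBv := Bv_ge hL hn heven
    push_cast at hzS hjz ⊢
    omega
  · push_neg at hz
    refine ⟨ZRs n L, Finset.filter_subset _ _, le_of_lt hz, ?_⟩
    intro S hSsub hScard hcont
    apply ext_of_delta hL hn S hSsub hScard
    have h1 := sum_S_bound (L := L) hn S hScard
    have hzS : (S.filter (fun x => deltaX n L x ≤ 0)).card = (ZRs n L).card := by
      apply le_antisymm
      · apply Finset.card_le_card
        intro x hx
        obtain ⟨hxS, hxd⟩ := Finset.mem_filter.mp hx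
        exact Finset.mem_filter.mpr ⟨hSsub hxS, hxd⟩
      · apply Finset.card_le_card
        intro x hx
        exact Finset.mem_filter.mpr ⟨hcont hx, (Finset.mem_filter.mp hx).2⟩
    have hjk : (S.filter (fun x => deltaX n L x = 2)).card ≤ (SPs n L).card := by
      apply Finset.card_le_card
      intro x hx
      obtain ⟨hxS, hxd⟩ := Finset.mem_filter.mp hx
      exact Finset.mem_filter.mpr ⟨hSsub hxS, hxd⟩
    have hkn := k_minus_n0 hL hn heven
    have hBv := Bv_ge hL hn heven
    push_cast at hzS hjk ⊢
    omega

end MainCycle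

def Pavoid (m : ℕ) (A : Finset ℕ → Prop) (LU : Finset ℕ) : Prop :=
  ∃ Z, Z ⊆ LU ∧ Z.card ≤ m ∧ ∀ F, F ⊆ LU → F.card = 2*m → Disjoint F Z → A F

def Pcont (m : ℕ) (A : Finset ℕ → Prop) (LU : Finset ℕ) : Prop :=
  ∃ Z, Z ⊆ LU ∧ Z.card ≤ m ∧ ∀ F, F ⊆ LU → F.card = 2*m → Z ⊆ F → A F

lemma avoid_to_cont (m : ℕ) (A B : Finset ℕ → Prop) (LU LU' : Finset ℕ)
    (hU : LU.card = 4*m) (hU' : LU'.card = 4*m)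
    (hAB : ∀ F', F' ⊆ LU' → F'.card = 2*m →
      (∃ F, F ⊆ LU ∧ F.card = 2*m ∧ A F ∧ Disjoint F F') → B F')
    (h : Pavoid m A LU) : Pcont m B LU' := by
  obtain ⟨Z, hZsub, hZcard, hZ⟩ := h
  have hZLU : (LU \ Z).card = 4*m - Z.card := by rw [Finset.card_sdiff_of_subset hZsub, hU]
  have havail : Z.card ≤ (LU' \ (LU \ Z)).card := by
    have h1 : (LU' \ (LU \ Z)).card ≥ LU'.card - (LU \ Z).card := le_card_sdiff _ _
    have h2 : Z.card ≤ 4*m := le_trans (Finset.card_le_card hZsub) (le_of_eq hU)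
    omega
  obtain ⟨Z', hZ'sub, hZ'card⟩ := (LU' \ (LU \ Z)).exists_subset_card_eq havail
  refine ⟨Z', hZ'sub.trans sdiff_subset, by omega, ?_⟩
  intro F' hF'sub hF'card hZ'F'
  apply hAB F' hF'sub hF'card
  -- find F ⊆ LU \ (F' ∪ Z) of card 2m
  have hsub1 : F' ∩ (LU \ Z) ⊆ F' \ Z' := by
    intro x hx
    obtain ⟨hx1, hx2⟩ := Finset.mem_inter.mp hx
    refine Finset.mem_sdiff.mpr ⟨hx1, fun hxZ' => ?_⟩
    have := hZ'sub hxZ'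
    exact (Finset.mem_sdiff.mp this).2 hx2
  have hc1 : (F' ∩ (LU \ Z)).card ≤ 2*m - Z.card := by
    have := Finset.card_le_card hsub1
    rw [Finset.card_sdiff_of_subset (hZ'F')] at this
    omega
  have hsub2 : LU ∩ (F' ∪ Z) ⊆ (F' ∩ (LU \ Z)) ∪ Z := by
    intro x hx
    obtain ⟨hx1, hx2⟩ := Finset.mem_inter.mp hx
    rcases Finset.mem_union.mp hx2 with hx3 | hx3
    · by_cases hxZ : x ∈ Z
      · exact Finset.mem_union_right _ hxZ
      · exact Finset.mem_union_left _ (Finset.mem_inter.mpr ⟨hx3, Finset.mem_sdiff.mpr ⟨hx1, hxZ⟩⟩)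
    · exact Finset.mem_union_right _ hx3
  have hc2 : (LU ∩ (F' ∪ Z)).card ≤ 2*m := by
    calc (LU ∩ (F' ∪ Z)).card ≤ ((F' ∩ (LU \ Z)) ∪ Z).card := Finset.card_le_card hsub2
      _ ≤ (F' ∩ (LU \ Z)).card + Z.card := Finset.card_union_le _ _
      _ ≤ 2*m := by
          have hZpos : Z.card ≤ 2*m - (F' ∩ (LU \ Z)).card ∨ True := Or.inr trivial
          omega
  have hc3 : 2*m ≤ (LU \ (F' ∪ Z)).card := by
    have := Finset.card_sdiff_add_card_inter LU (F' ∪ Z)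
    omega
  obtain ⟨F, hFsub, hFcard⟩ := (LU \ (F' ∪ Z)).exists_subset_card_eq hc3
  have hFLU : F ⊆ LU := hFsub.trans sdiff_subset
  refine ⟨F, hFLU, hFcard, hZ F hFLU hFcard ?_, ?_⟩
  · -- Disjoint F Z
    apply Finset.disjoint_left.mpr
    intro x hxF hxZ
    have := hFsub hxF
    exact (Finset.mem_sdiff.mp this).2 (Finset.mem_union_right _ hxZ)
  · apply Finset.disjoint_left.mpr
    intro x hxF hxF'
    have := hFsub hxF
    exact (Finset.mem_sdiff.mp this).2 (Finset.mem_union_left _ hxF')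

lemma cont_to_avoid (m : ℕ) (A B : Finset ℕ → Prop) (LU LU' : Finset ℕ)
    (hU : LU.card = 4*m) (hU' : LU'.card = 4*m)
    (hAB : ∀ F', F' ⊆ LU' → F'.card = 2*m →
      (∃ F, F ⊆ LU ∧ F.card = 2*m ∧ A F ∧ Disjoint F F') → B F')
    (h : Pcont m A LU) : Pavoid m B LU' := by
  obtain ⟨Z, hZsub, hZcard, hZ⟩ := h
  refine ⟨Z ∩ LU', Finset.inter_subset_right, ?_, ?_⟩
  · exact le_trans (Finset.card_le_card Finset.inter_subset_left) hZcard
  intro F' hF'sub hF'card hdisj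
  apply hAB F' hF'sub hF'card
  have hZF' : Disjoint Z F' := by
    apply Finset.disjoint_left.mpr
    intro x hxZ hxF'
    exact Finset.disjoint_right.mp hdisj (Finset.mem_inter.mpr ⟨hxZ, hF'sub hxF'⟩) hxF'
  have hZsub2 : Z ⊆ LU \ F' := by
    intro x hx
    exact Finset.mem_sdiff.mpr ⟨hZsub hx, fun hc => Finset.disjoint_left.mp hZF' hx hc⟩
  have hcard2 : 2*m - Z.card ≤ ((LU \ F') \ Z).card := by
    have h1 : (LU \ F').card ≥ LU.card - F'.card := le_card_sdiff _ _
    have h2 : ((LU \ F') \ Z).card = (LU \ F').card - Z.card := Finset.card_sdiff_of_subset hZsub2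
    omega
  obtain ⟨W, hWsub, hWcard⟩ := ((LU \ F') \ Z).exists_subset_card_eq hcard2
  have hdisjWZ : Disjoint Z W := by
    apply Finset.disjoint_right.mpr
    intro x hxW
    exact (Finset.mem_sdiff.mp (hWsub hxW)).2
  refine ⟨Z ∪ W, ?_, ?_, hZ _ ?_ ?_ Finset.subset_union_left, ?_⟩
  · exact Finset.union_subset (hZsub2.trans sdiff_subset) ((hWsub.trans sdiff_subset).trans sdiff_subset)
  · rw [Finset.card_union_of_disjoint hdisjWZ, hWcard]
    omega
  · exact Finset.union_subset (hZsub2.trans sdiff_subset) ((hWsub.trans sdiff_subset).trans sdiff_subset)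
  · rw [Finset.card_union_of_disjoint hdisjWZ, hWcard]
    omega
  · -- Disjoint (Z ∪ W) F'
    apply Finset.disjoint_left.mpr
    intro x hx hxF'
    rcases Finset.mem_union.mp hx with hx1 | hx1
    · exact Finset.disjoint_left.mp hZF' hx1 hxF'
    · exact (Finset.mem_sdiff.mp (hWsub.trans sdiff_subset <| hx1)).2 hxF'

-- === the partial systems on cycle 2 plus a suffix of the path ===

/-- `Asys m p q r L t F`: the second cycle plus the last `t` edges of the path can be
coloured, with value `F` at vertex `pu p (r-t)`. -/
def Asys (m p q r : ℕ) (L : ℕ → Finset ℕ) (t : ℕ) (F : Finset ℕ) : Prop :=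
  ∃ ψ : ℕ → Finset ℕ,
    ψ (pu p (r-t)) = F ∧
    (∀ j, j < 2*q → ψ (cv p r j) ⊆ L (cv p r j) ∧ (ψ (cv p r j)).card = 2*m) ∧
    (∀ j, j < 2*q → Disjoint (ψ (cv p r j)) (ψ (cv p r ((j+1) % (2*q))))) ∧
    (∀ i, r-t ≤ i → i < r →
      (ψ (pu p i) ⊆ L (pu p i) ∧ (ψ (pu p i)).card = 2*m) ∧
      Disjoint (ψ (pu p i)) (ψ (pu p (i+1))))

section Vertices
variable {p q r : ℕ}

lemma pu_inj (hp : 2 ≤ p) {i i' : ℕ} (h : pu p i = pu p i') : i = i' := by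
  unfold pu at h
  split_ifs at h <;> omega

lemma pu_le (hp : 2 ≤ p) {i : ℕ} (hi : i ≤ r) : pu p i < 2*p + r := by
  unfold pu; split_ifs <;> omega

lemma cv_ne_pu (hp : 2 ≤ p) {j i : ℕ} (hj : 1 ≤ j) (hi : i ≤ r) :
    cv p r j ≠ pu p i := by
  unfold cv pu; split_ifs <;> omega

end Vertices

section Path

variable {m p q r : ℕ} {L : ℕ → Finset ℕ}

/-- base case: the second cycle alone, avoid flavour. -/
lemma base_avoid (hL : ∀ v, (L v).card = 4*m) (hp : 2 ≤ p) (hq : 2 ≤ q) :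
    Pavoid m (Asys m p q r L 0) (L (pu p r)) := by
  obtain ⟨Z, hZsub, hZcard, hext⟩ :=
    cycle_avoid (m := m) (n := 2*q) (L := fun j => L (cv p r j))
      (fun j => hL _) (by omega) ⟨q, by ring⟩
  have hcv0 : cv p r 0 = pu p r := by unfold cv; simp
  rw [hcv0] at hZsub hext
  refine ⟨Z, hZsub, hZcard, ?_⟩
  intro F hFsub hFcard hFdisj
  obtain ⟨φ, hφ0, hφprops, hφdisj, hφlast⟩ := hext F hFsub hFcard hFdisj
  -- translate φ (indexed by cycle positions) into a vertex-indexed function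
  set ψ : ℕ → Finset ℕ := fun v => if v = pu p r then φ 0 else φ (v + 1 - (2*p+r)) with hψ
  have hval : ∀ j', j' < 2*q → ψ (cv p r j') = φ j' := by
    intro j' hj'
    by_cases hj0 : j' = 0
    · subst hj0
      rw [hcv0]
      show (if pu p r = pu p r then φ 0 else _) = φ 0
      rw [if_pos rfl]
    · show (if cv p r j' = pu p r then φ 0 else φ (cv p r j' + 1 - (2*p+r))) = φ j'
      rw [if_neg (cv_ne_pu hp (by omega) (le_refl r))]
      congr 1
      unfold cv; split_ifs <;> omega
  refine ⟨ψ, ?_, ?_, ?_, ?_⟩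
  · rw [show r - 0 = r by omega, ← hcv0, hval 0 (by omega), hφ0]
  · intro j hj
    rw [hval j hj]
    exact hφprops j hj
  · intro j hj
    rw [hval j hj, hval _ (Nat.mod_lt _ (by omega))]
    by_cases hlast : j = 2*q - 1
    · subst hlast
      rw [show 2*q-1+1 = 2*q by omega, Nat.mod_self]
      rw [← hφ0] at hφlast
      exact hφlast
    · rw [Nat.mod_eq_of_lt (by omega : j+1 < 2*q)]
      exact hφdisj j (by omega)
  · intro i hi1 hi2
    omega

/-- base case: the second cycle alone, contain flavour. -/
lemma base_contain (hL : ∀ v, (L v).card = 4*m) (hp : 2 ≤ p) (hq : 2 ≤ q) :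
    Pcont m (Asys m p q r L 0) (L (pu p r)) := by
  obtain ⟨Z, hZsub, hZcard, hext⟩ :=
    cycle_contain (m := m) (n := 2*q) (L := fun j => L (cv p r j))
      (fun j => hL _) (by omega) ⟨q, by ring⟩
  have hcv0 : cv p r 0 = pu p r := by unfold cv; simp
  rw [hcv0] at hZsub hext
  refine ⟨Z, hZsub, hZcard, ?_⟩
  intro F hFsub hFcard hFcont
  obtain ⟨φ, hφ0, hφprops, hφdisj, hφlast⟩ := hext F hFsub hFcard hFcont
  -- translate φ (indexed by cycle positions) into a vertex-indexed function
  set ψ : ℕ → Finset ℕ := fun v => if v = pu p r then φ 0 else φ (v + 1 - (2*p+r)) with hψ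
  have hval : ∀ j', j' < 2*q → ψ (cv p r j') = φ j' := by
    intro j' hj'
    by_cases hj0 : j' = 0
    · subst hj0
      rw [hcv0]
      show (if pu p r = pu p r then φ 0 else _) = φ 0
      rw [if_pos rfl]
    · show (if cv p r j' = pu p r then φ 0 else φ (cv p r j' + 1 - (2*p+r))) = φ j'
      rw [if_neg (cv_ne_pu hp (by omega) (le_refl r))]
      congr 1
      unfold cv; split_ifs <;> omega
  refine ⟨ψ, ?_, ?_, ?_, ?_⟩
  · rw [show r - 0 = r by omega, ← hcv0, hval 0 (by omega), hφ0]
  · intro j hj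
    rw [hval j hj]
    exact hφprops j hj
  · intro j hj
    rw [hval j hj, hval _ (Nat.mod_lt _ (by omega))]
    by_cases hlast : j = 2*q - 1
    · subst hlast
      rw [show 2*q-1+1 = 2*q by omega, Nat.mod_self]
      rw [← hφ0] at hφlast
      exact hφlast
    · rw [Nat.mod_eq_of_lt (by omega : j+1 < 2*q)]
      exact hφdisj j (by omega)
  · intro i hi1 hi2
    omega

/-- transfer step along one path edge. -/
lemma step_transfer (hp : 2 ≤ p) (t : ℕ) (ht : t + 1 ≤ r) :
    ∀ F', F' ⊆ L (pu p (r-t-1)) → F'.card = 2*m →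
      (∃ F, F ⊆ L (pu p (r-t)) ∧ F.card = 2*m ∧ Asys m p q r L t F ∧ Disjoint F F') →
      Asys m p q r L (t+1) F' := by
  intro F' hF'sub hF'card ⟨F, hFsub, hFcard, ⟨ψ, hψval, hψcyc, hψcycd, hψpath⟩, hdisj⟩
  set v' := pu p (r-t-1) with hv'
  have hne : ∀ i, r-t ≤ i → i ≤ r → pu p i ≠ v' := by
    intro i hi1 hi2 h
    have := pu_inj hp h
    omega
  have hnecv : ∀ j, j < 2*q → cv p r j ≠ v' := by
    intro j hj h
    by_cases hj0 : j = 0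
    · subst hj0
      rw [show cv p r 0 = pu p r by unfold cv; simp] at h
      exact hne r (by omega) (le_refl r) h
    · exact cv_ne_pu hp (by omega) (by omega) h
  refine ⟨Function.update ψ v' F', ?_, ?_, ?_, ?_⟩
  · rw [show r-(t+1) = r-t-1 by omega, ← hv', Function.update_self]
  · intro j hj
    rw [Function.update_of_ne (hnecv j hj)]
    exact hψcyc j hj
  · intro j hj
    rw [Function.update_of_ne (hnecv j hj), Function.update_of_ne (hnecv _ (Nat.mod_lt _ (by omega)))]
    exact hψcycd j hj
  · intro i hi1 hi2
    by_cases hie : i = r-t-1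
    · subst hie
      rw [← hv', Function.update_self]
      have hnext : pu p (r-t-1+1) ≠ v' := hne _ (by omega) (by omega)
      rw [Function.update_of_ne hnext]
      constructor
      · exact ⟨hF'sub, hF'card⟩
      · rw [show r-t-1+1 = r-t by omega, hψval]
        exact hdisj.symm
    · have h1 : pu p i ≠ v' := hne i (by omega) (by omega)
      have h2 : pu p (i+1) ≠ v' := hne (i+1) (by omega) (by omega)
      rw [Function.update_of_ne h1, Function.update_of_ne h2]
      exact hψpath i (by omega) hi2

/-- the flavour alternation along the path. -/
lemma path_prop (hL : ∀ v, (L v).card = 4*m) (hp : 2 ≤ p) (hq : 2 ≤ q) :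
    ∀ t, t ≤ r →
      (Even (r-t) → Pavoid m (Asys m p q r L t) (L (pu p (r-t)))) ∧
      (¬ Even (r-t) → Pcont m (Asys m p q r L t) (L (pu p (r-t)))) := by
  intro t
  induction t with
  | zero =>
    intro _
    constructor
    · intro _; exact base_avoid hL hp hq
    · intro _; exact base_contain hL hp hq
  | succ t ih =>
    intro ht
    obtain ⟨ihA, ihC⟩ := ih (by omega)
    have hstep := step_transfer (m := m) (q := q) (L := L) hp t ht
    have hpar : ¬ Even (r - t) ↔ Even (r - (t+1)) := by
      have : r - t = (r - (t+1)) + 1 := by omega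
      rw [this]
      simp [Nat.even_add_one]
    constructor
    · intro he
      apply cont_to_avoid m (Asys m p q r L t) _ (L (pu p (r-t))) _ (hL _) (hL _) ?_ (ihC ?_)
      · intro F' h1 h2 h3
        exact hstep F' (by rwa [show r-(t+1) = r-t-1 by omega] at h1) h2 h3
      · rw [hpar]; exact he
    · intro he
      apply avoid_to_cont m (Asys m p q r L t) _ (L (pu p (r-t))) _ (hL _) (hL _) ?_ (ihA ?_)
      · intro F' h1 h2 h3
        exact hstep F' (by rwa [show r-(t+1) = r-t-1 by omega] at h1) h2 h3
      · by_contra hc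
        exact he (hpar.mp hc)

end Path

theorem stmt_11 (m p q r : ℕ) (hm : 1 ≤ m) (hp : 2 ≤ p) (hq : 2 ≤ q) :
    Choosable (twoCycles p q r) (4 * m) (2 * m) := by
  intro L hL
  -- cycle 1
  obtain ⟨Z1, hZ1sub, hZ1card, hext1⟩ :=
    cycle_avoid (m := m) (n := 2*p) (L := L) hL (by omega) ⟨p, by ring⟩
  -- cycle 2 + path, propagated to vertex 0
  have hpp := (path_prop (m := m) hL hp hq r (le_refl r)).1 (by simp)
  rw [show r - r = 0 by omega, show pu p 0 = 0 by unfold pu; simp] at hpp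
  obtain ⟨ZX, hZXsub, hZXcard, hextX⟩ := hpp
  -- choose the common seed S
  have hcard : 2*m ≤ (L 0 \ (Z1 ∪ ZX)).card := by
    have h1 : (L 0 \ (Z1 ∪ ZX)).card ≥ (L 0).card - (Z1 ∪ ZX).card := le_card_sdiff _ _
    have h2 : (Z1 ∪ ZX).card ≤ Z1.card + ZX.card := Finset.card_union_le _ _
    have h3 := hL 0
    omega
  obtain ⟨S, hSsub, hScard⟩ := (L 0 \ (Z1 ∪ ZX)).exists_subset_card_eq hcard
  have hSL0 : S ⊆ L 0 := hSsub.trans sdiff_subset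
  have hSZ1 : Disjoint S Z1 := by
    apply Finset.disjoint_left.mpr
    intro x hx hxZ
    exact (Finset.mem_sdiff.mp (hSsub hx)).2 (Finset.mem_union_left _ hxZ)
  have hSZX : Disjoint S ZX := by
    apply Finset.disjoint_left.mpr
    intro x hx hxZ
    exact (Finset.mem_sdiff.mp (hSsub hx)).2 (Finset.mem_union_right _ hxZ)
  obtain ⟨φ1, hφ10, hφ1props, hφ1disj, hφ1last⟩ := hext1 S hSL0 hScard hSZ1
  obtain ⟨ψ, hψ0, hψcyc, hψcycd, hψpath⟩ := hextX S hSL0 hScard hSZX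
  rw [show r - r = 0 by omega, show pu p 0 = 0 by unfold pu; simp] at hψ0
  -- default values
  have hdflt : ∀ v, ∃ D, D ⊆ L v ∧ D.card = 2*m := by
    intro v
    apply (L v).exists_subset_card_eq
    rw [hL v]; omega
  choose dflt hdsub hdcard using hdflt
  -- the final assignment
  set φ : ℕ → Finset ℕ :=
    fun v => if v < 2*p then φ1 v else if v < 2*p + r + 2*q - 1 then ψ v else dflt v with hφ
  -- value lemmas
  have hpu_val : ∀ i, i ≤ r → φ (pu p i) = ψ (pu p i) := by
    intro i hi
    by_cases hi0 : i = 0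
    · subst hi0
      rw [show pu p 0 = 0 by unfold pu; simp, hψ0]
      show (if (0:ℕ) < 2*p then φ1 0 else _) = S
      rw [if_pos (by omega), hφ10]
    · have hv : pu p i = 2*p + i - 1 := by unfold pu; rw [if_neg hi0]
      show (if pu p i < 2*p then φ1 (pu p i) else if pu p i < 2*p + r + 2*q - 1 then ψ (pu p i) else dflt (pu p i)) = ψ (pu p i)
      rw [hv]
      rw [if_neg (by omega), if_pos (by omega)]
  have hcv_val : ∀ j, j < 2*q → φ (cv p r j) = ψ (cv p r j) := by
    intro j hj
    by_cases hj0 : j = 0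
    · subst hj0
      rw [show cv p r 0 = pu p r by unfold cv; simp]
      exact hpu_val r (le_refl r)
    · have hv : cv p r j = 2*p + r + j - 1 := by unfold cv; rw [if_neg hj0]
      show (if cv p r j < 2*p then φ1 (cv p r j) else if cv p r j < 2*p + r + 2*q - 1 then ψ (cv p r j) else dflt (cv p r j)) = ψ (cv p r j)
      rw [hv]
      rw [if_neg (by omega), if_pos (by omega)]
  -- the three conclusions
  refine ⟨φ, ?_, ?_, ?_⟩
  · intro v
    show (if v < 2*p then φ1 v else if v < 2*p + r + 2*q - 1 then ψ v else dflt v) ⊆ L v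
    split_ifs with h1 h2
    · exact (hφ1props v h1).1
    · -- v is a path or cycle-2 vertex
      by_cases hpath : v < 2*p + r
      · -- path vertex i = v - 2*p + 1 ∈ [1, r]
        have hi : v = pu p (v - 2*p + 1) := by unfold pu; rw [if_neg (by omega)]; omega
        rw [hi]
        by_cases hilast : v - 2*p + 1 = r
        · rw [hilast, show pu p r = cv p r 0 by unfold cv; simp]
          exact (hψcyc 0 (by omega)).1
        · exact (hψpath (v - 2*p + 1) (by omega) (by omega)).1.1
      · -- cycle-2 vertex j = v - (2*p+r) + 1 ∈ [1, 2q-1]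
        have hj : v = cv p r (v - (2*p+r) + 1) := by unfold cv; rw [if_neg (by omega)]; omega
        rw [hj]
        exact (hψcyc (v - (2*p+r) + 1) (by omega)).1
    · exact hdsub v
  · intro v
    show (if v < 2*p then φ1 v else if v < 2*p + r + 2*q - 1 then ψ v else dflt v).card = 2*m
    split_ifs with h1 h2
    · exact (hφ1props v h1).2
    · by_cases hpath : v < 2*p + r
      · have hi : v = pu p (v - 2*p + 1) := by unfold pu; rw [if_neg (by omega)]; omega
        rw [hi]
        by_cases hilast : v - 2*p + 1 = r
        · rw [hilast, show pu p r = cv p r 0 by unfold cv; simp]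
          exact (hψcyc 0 (by omega)).2
        · exact (hψpath (v - 2*p + 1) (by omega) (by omega)).1.2
      · have hj : v = cv p r (v - (2*p+r) + 1) := by unfold cv; rw [if_neg (by omega)]; omega
        rw [hj]
        exact (hψcyc (v - (2*p+r) + 1) (by omega)).2
    · exact hdcard v
  · intro u v hadj
    rw [twoCycles, SimpleGraph.fromEdgeSet_adj] at hadj
    obtain ⟨hmem, hne⟩ := hadj
    simp only [Set.mem_setOf_eq] at hmem
    -- the three edge families
    have hG1 : ∀ i, i < 2*p → Disjoint (φ i) (φ ((i+1) % (2*p))) := by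
      intro i hi
      have hb : (i+1) % (2*p) < 2*p := Nat.mod_lt _ (by omega)
      have e1 : φ i = φ1 i := by
        show (if i < 2*p then φ1 i else _) = φ1 i
        rw [if_pos hi]
      have e2 : φ ((i+1) % (2*p)) = φ1 ((i+1) % (2*p)) := by
        show (if (i+1) % (2*p) < 2*p then φ1 ((i+1) % (2*p)) else _) = _
        rw [if_pos hb]
      rw [e1, e2]
      by_cases hlast : i = 2*p - 1
      · subst hlast
        rw [show 2*p-1+1 = 2*p by omega, Nat.mod_self, hφ10]
        exact hφ1last
      · rw [Nat.mod_eq_of_lt (by omega : i+1 < 2*p)]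
        exact hφ1disj i (by omega)
    have hG2 : ∀ j, j < r → Disjoint (φ (pu p j)) (φ (pu p (j+1))) := by
      intro j hj
      rw [hpu_val j (by omega), hpu_val (j+1) (by omega)]
      exact (hψpath j (by omega) hj).2
    have hG3 : ∀ j, j < 2*q → Disjoint (φ (cv p r j)) (φ (cv p r ((j+1) % (2*q)))) := by
      intro j hj
      rw [hcv_val j hj, hcv_val _ (Nat.mod_lt _ (by omega))]
      exact hψcycd j hj
    rcases hmem with ⟨i, hi, he⟩ | ⟨j, hj, he⟩ | ⟨j, hj, he⟩ <;>
      rw [Sym2.eq_iff] at he <;>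
      rcases he with ⟨rfl, rfl⟩ | ⟨rfl, rfl⟩
    · exact hG1 _ hi
    · exact (hG1 _ hi).symm
    · exact hG2 _ hj
    · exact (hG2 _ hj).symm
    · exact hG3 _ hj
    · exact (hG3 _ hj).symm
end

section
/- Let G be a graph, v a vertex of G, and let G' be obtained from G by deleting v and identifying (merging) all neighbours of v into a single vertex. If G is (4m, 2m)-choosable then G' is (4m, 2m)-choosable. Consequently, if Θ_{2,2r,2s} is (4m,2m)-choosable then Θ_{1,2r−1,2s−1} is (4m,2m)-choosable. -/
/-- The graph obtained from `G` by deleting the vertex `v` and merging all of its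
neighbours into a single new vertex (the `Sum.inr` vertex); the remaining vertices
are those different from `v` and not adjacent to `v`. -/
def mergeNbrs {V : Type} (G : SimpleGraph V) (v : V) :
    SimpleGraph ({w : V // w ≠ v ∧ ¬G.Adj v w} ⊕ Unit) where
  Adj x y :=
    match x, y with
    | Sum.inl a, Sum.inl b => G.Adj a.1 b.1
    | Sum.inl a, Sum.inr _ => ∃ u, G.Adj v u ∧ G.Adj a.1 u
    | Sum.inr _, Sum.inl b => ∃ u, G.Adj v u ∧ G.Adj u b.1
    | Sum.inr _, Sum.inr _ => False
  symm := by
    constructor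
    rintro (a | a) (b | b) h
    · exact G.adj_symm h
    · obtain ⟨u, hu1, hu2⟩ := h; exact ⟨u, hu1, G.adj_symm hu2⟩
    · obtain ⟨u, hu1, hu2⟩ := h; exact ⟨u, hu1, G.adj_symm hu2⟩
    · exact h
  loopless := by
    constructor
    rintro (a | a) h
    · exact G.irrefl h
    · exact h

/-- The `j`-th vertex of a path of length `len` from vertex `0` to vertex `1`,
whose internal vertices are `o, o+1, …, o+len-2`. -/
def pf (o len j : ℕ) : ℕ := if j = 0 then 0 else if j = len then 1 else o + j - 1

/-- The theta graph `Θ_{a,b,c}`: two vertices `0` and `1` joined by three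
internally disjoint paths of lengths `a`, `b`, `c`. -/
def theta (a b c : ℕ) : SimpleGraph ℕ :=
  SimpleGraph.fromEdgeSet
    { e | (∃ i < a, e = s(pf 2 a i, pf 2 a (i + 1))) ∨
          (∃ i < b, e = s(pf (a + 1) b i, pf (a + 1) b (i + 1))) ∨
          (∃ i < c, e = s(pf (a + b) c i, pf (a + b) c (i + 1))) }

/-!
If `φ` is a `(2k, k)`-choice for `G` with the list of every vertex of `N(v) ∪ {v}` equal to the
list `L` of the merged vertex, then each neighbour `u` of `v` has `φ u ⊆ L \ φ v`, a set of size
`k`, so all neighbours carry the same colour set `L \ φ v`; giving it to the merged vertex yields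
a choice for `G'`. Contracting the neighbourhood of the branch vertex `0` of `Θ_{2,2r,2s}` turns
it into `Θ_{1,2r-1,2s-1}`, and choosability passes to subgraphs.
-/

/-- Lists on `G₂` are pushed forward along `f`; vertices outside the image get arbitrary lists. -/
theorem Choosable.of_injective_hom {V₁ V₂ : Type} {G₁ : SimpleGraph V₁} {G₂ : SimpleGraph V₂}
    (f : G₂ →g G₁) (hf : Function.Injective f) {a b : ℕ} (h : Choosable G₁ a b) :
    Choosable G₂ a b := by
  classical
  intro L hL
  set L₁ : V₁ → Finset ℕ := Function.extend f L (fun _ => Finset.range a)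
  have hL₁ : ∀ u, (L₁ u).card = a := by
    intro u
    simp only [L₁, Function.extend_def]
    split_ifs
    exacts [hL _, Finset.card_range a]
  obtain ⟨φ, hsub, hcard, hdisj⟩ := h L₁ hL₁
  refine ⟨φ ∘ f, fun x => ?_, fun x => hcard (f x), fun x y hxy => hdisj _ _ (f.map_adj hxy)⟩
  simpa only [Function.comp_apply, L₁, hf.extend_apply] using hsub (f x)

namespace mergeNbrs

variable {V : Type} {G : SimpleGraph V} {v x y : V}

noncomputable def proj (G : SimpleGraph V) (v x : V) : {w : V // w ≠ v ∧ ¬G.Adj v w} ⊕ Unit :=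
  open Classical in if h : x ≠ v ∧ ¬G.Adj v x then Sum.inl ⟨x, h⟩ else Sum.inr ()

theorem proj_of_ne_of_not_adj (h : x ≠ v ∧ ¬G.Adj v x) : proj G v x = Sum.inl ⟨x, h⟩ :=
  dif_pos h

theorem proj_self : proj G v v = Sum.inr () :=
  dif_neg fun h => h.1 rfl

theorem proj_of_adj (h : G.Adj v x) : proj G v x = Sum.inr () :=
  dif_neg fun h' => h'.2 h

theorem proj_eq_proj_iff (hx : x ≠ v ∧ ¬G.Adj v x) : proj G v y = proj G v x ↔ y = x := by
  refine ⟨fun h => ?_, fun h => h ▸ rfl⟩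
  rw [proj_of_ne_of_not_adj hx] at h
  by_cases hy : y ≠ v ∧ ¬G.Adj v y
  · rw [proj_of_ne_of_not_adj hy, Sum.inl.injEq, Subtype.mk.injEq] at h
    exact h
  · rw [proj, dif_neg hy] at h
    exact absurd h Sum.inr_ne_inl

theorem adj_proj_of_not_adj (hxy : G.Adj x y) (hy : y ≠ v) (hvy : ¬G.Adj v y) :
    (mergeNbrs G v).Adj (proj G v x) (proj G v y) := by
  rw [proj_of_ne_of_not_adj ⟨hy, hvy⟩]
  by_cases hvx : G.Adj v x
  · rw [proj_of_adj hvx]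
    exact ⟨x, hvx, hxy⟩
  · have hx : x ≠ v := by
      rintro rfl
      exact hvy hxy
    rw [proj_of_ne_of_not_adj ⟨hx, hvx⟩]
    exact hxy

end mergeNbrs

open mergeNbrs in
theorem Choosable.mergeNbrs {V : Type} {G : SimpleGraph V} (v : V) {k : ℕ}
    (hG : Choosable G (2 * k) k) : Choosable (mergeNbrs G v) (2 * k) k := by
  intro L' hL'
  obtain ⟨φ, hsub, hcard, hdisj⟩ := hG (fun w => L' (proj G v w)) (fun w => hL' _)
  set S := L' (Sum.inr ()) \ φ v
  have hvS : φ v ⊆ L' (Sum.inr ()) := by simpa only [proj_self] using hsub v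
  have hScard : S.card = k := by
    rw [Finset.card_sdiff_of_subset hvS, hL', hcard]
    omega
  have hnbr : ∀ u, G.Adj v u → φ u = S := by
    intro u hu
    have huS : φ u ⊆ S := Finset.subset_sdiff.mpr
      ⟨by simpa only [proj_of_adj hu] using hsub u, (hdisj v u hu).symm⟩
    exact Finset.eq_of_subset_of_card_le huS (by rw [hScard, hcard])
  refine ⟨Sum.elim (fun w => φ w) (fun _ => S), ?_, ?_, ?_⟩
  · rintro (w | -)
    · simpa only [Sum.elim_inl, proj_of_ne_of_not_adj w.2] using hsub w
    · exact Finset.sdiff_subset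
  · rintro (w | -)
    exacts [hcard w, hScard]
  · rintro (a | _) (b | _) h
    · exact hdisj a b h
    · obtain ⟨u, hvu, hau⟩ := h
      simpa only [Sum.elim_inl, Sum.elim_inr, ← hnbr u hvu] using hdisj a u hau
    · obtain ⟨u, hvu, hub⟩ := h
      simpa only [Sum.elim_inl, Sum.elim_inr, ← hnbr u hvu] using hdisj u b hub
    · exact h.elim

def IsPathEdge (o ℓ x y : ℕ) : Prop := ∃ i < ℓ, s(x, y) = s(pf o ℓ i, pf o ℓ (i + 1))

theorem pf_zero (o ℓ : ℕ) : pf o ℓ 0 = 0 := rfl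

theorem pf_ne_pf_succ {o ℓ i : ℕ} (ho : 2 ≤ o) (hi : i < ℓ) : pf o ℓ i ≠ pf o ℓ (i + 1) := by
  unfold pf
  split_ifs <;> first | omega | simp_all

theorem theta_adj_iff {a b c x y : ℕ} : (theta a b c).Adj x y ↔
    (IsPathEdge 2 a x y ∨ IsPathEdge (a + 1) b x y ∨ IsPathEdge (a + b) c x y) ∧ x ≠ y := by
  rw [theta, SimpleGraph.fromEdgeSet_adj]
  rfl

theorem IsPathEdge.eq_of_zero {o ℓ w : ℕ} (ho : 2 ≤ o) (hℓ : 2 ≤ ℓ) (h : IsPathEdge o ℓ 0 w) :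
    w = o := by
  obtain ⟨i, hi, he⟩ := h
  rw [Sym2.eq_iff] at he
  unfold pf at he
  rcases he with ⟨h₁, h₂⟩ | ⟨h₁, h₂⟩ <;> split_ifs at h₁ h₂ <;> first | omega | simp_all

theorem theta_adj_zero {a b c w : ℕ} (ha : 2 ≤ a) (hb : 2 ≤ b) (hc : 2 ≤ c)
    (h : (theta a b c).Adj 0 w) : w = 2 ∨ w = a + 1 ∨ w = a + b := by
  obtain ⟨h | h | h, -⟩ := theta_adj_iff.1 h
  · exact Or.inl (h.eq_of_zero le_rfl ha)
  · exact Or.inr (Or.inl (h.eq_of_zero (by omega) hb))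
  · exact Or.inr (Or.inr (h.eq_of_zero (by omega) hc))

open mergeNbrs

/-- Contracting the neighbourhood of `0` shortens a path `0, p₁, p₂, …, p_ℓ` of `G` to the path
`0', p₂, …, p_ℓ` of `mergeNbrs G 0`; `σ` identifies the vertices of a path of length `ℓ - 1`
with `p₂, …, p_ℓ`. -/
theorem mergeNbrs_adj_of_isPathEdge {G : SimpleGraph ℕ} {o₁ o₂ ℓ : ℕ} {σ : ℕ → ℕ}
    (hpath : ∀ i < ℓ, G.Adj (pf o₂ ℓ i) (pf o₂ ℓ (i + 1)))
    (hfar : ∀ j, 2 ≤ j → j ≤ ℓ → pf o₂ ℓ j ≠ 0 ∧ ¬G.Adj 0 (pf o₂ ℓ j))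
    (hσ₀ : σ 0 = 0) (hσ : ∀ i, 1 ≤ i → i ≤ ℓ - 1 → σ (pf o₁ (ℓ - 1) i) = pf o₂ ℓ (i + 1))
    {x y : ℕ} (h : IsPathEdge o₁ (ℓ - 1) x y) :
    (mergeNbrs G 0).Adj (proj G 0 (σ x)) (proj G 0 (σ y)) := by
  obtain ⟨i, hi, he⟩ := h
  have hproj : ∀ j ≤ ℓ - 1, proj G 0 (σ (pf o₁ (ℓ - 1) j)) = proj G 0 (pf o₂ ℓ (j + 1)) := by
    intro j hj
    rcases Nat.eq_zero_or_pos j with rfl | hj₀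
    · have h₀ := hpath 0 (by omega)
      rw [pf_zero] at h₀ ⊢
      rw [hσ₀, proj_self, proj_of_adj h₀]
    · rw [hσ j hj₀ hj]
  have hadj : (mergeNbrs G 0).Adj (proj G 0 (pf o₂ ℓ (i + 1))) (proj G 0 (pf o₂ ℓ (i + 2))) :=
    adj_proj_of_not_adj (hpath (i + 1) (by omega)) (hfar (i + 2) (by omega) (by omega)).1
      (hfar (i + 2) (by omega) (by omega)).2
  rw [← hproj i hi.le, ← hproj (i + 1) hi] at hadj
  rcases Sym2.eq_iff.1 he with ⟨rfl, rfl⟩ | ⟨rfl, rfl⟩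
  exacts [hadj, hadj.symm]

/-- The vertex `i ≥ 1` of each path of `Θ_{1,2r-1,2s-1}` is sent to the vertex `i + 1` of the
corresponding path of `Θ_{2,2r,2s}`. -/
def thetaShift (r k : ℕ) : ℕ := if k ≤ 1 then k else if k ≤ 2 * r - 1 then k + 2 else k + 3

theorem thetaShift_injective (r : ℕ) : Function.Injective (thetaShift r) := by
  intro x y h
  unfold thetaShift at h
  split_ifs at h <;> omega

theorem theta_not_adj_zero {r s w : ℕ} (hr : 1 ≤ r) (hs : 1 ≤ s) (h₂ : w ≠ 2) (h₃ : w ≠ 3)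
    (h₄ : w ≠ 2 * r + 2) : ¬(theta 2 (2 * r) (2 * s)).Adj 0 w := fun h => by
  have := theta_adj_zero le_rfl (by omega) (by omega) h
  omega

theorem thetaShift_ne_zero_and_not_adj {r s k : ℕ} (hr : 1 ≤ r) (hs : 1 ≤ s) (hk : 1 ≤ k) :
    thetaShift r k ≠ 0 ∧ ¬(theta 2 (2 * r) (2 * s)).Adj 0 (thetaShift r k) := by
  refine ⟨?_, theta_not_adj_zero hr hs ?_ ?_ ?_⟩ <;> unfold thetaShift <;> split_ifs <;> omega

theorem theta_adj_mergeNbrs {r s x y : ℕ} (hr : 1 ≤ r) (hs : 1 ≤ s)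
    (h : (theta 1 (2 * r - 1) (2 * s - 1)).Adj x y) :
    (mergeNbrs (theta 2 (2 * r) (2 * s)) 0).Adj
      (proj _ 0 (thetaShift r x)) (proj _ 0 (thetaShift r y)) := by
  have hfar : ∀ o ℓ, (o = 2 ∧ ℓ = 2 ∨ o = 3 ∧ ℓ = 2 * r ∨ o = 2 * r + 2 ∧ ℓ = 2 * s) →
      ∀ j, 2 ≤ j → j ≤ ℓ → pf o ℓ j ≠ 0 ∧ ¬(theta 2 (2 * r) (2 * s)).Adj 0 (pf o ℓ j) := by
    intro o ℓ hoℓ j hj hjℓ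
    refine ⟨?_, theta_not_adj_zero hr hs ?_ ?_ ?_⟩ <;> unfold pf <;> split_ifs <;> omega
  have hσ₀ : thetaShift r 0 = 0 := rfl
  obtain ⟨h | h | h, -⟩ := theta_adj_iff.1 h
  · refine mergeNbrs_adj_of_isPathEdge (o₂ := 2) (ℓ := 2)
      (fun i hi => theta_adj_iff.2 ⟨Or.inl ⟨i, hi, rfl⟩, pf_ne_pf_succ le_rfl hi⟩)
      (hfar 2 2 (by omega)) hσ₀ (fun i hi hi' => ?_) h
    unfold pf thetaShift; split_ifs <;> omega
  · refine mergeNbrs_adj_of_isPathEdge (o₂ := 2 + 1) (ℓ := 2 * r)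
      (fun i hi => theta_adj_iff.2 ⟨Or.inr (Or.inl ⟨i, hi, rfl⟩), pf_ne_pf_succ (by omega) hi⟩)
      (hfar _ _ (by omega)) hσ₀ (fun i hi hi' => ?_) h
    unfold pf thetaShift; split_ifs <;> omega
  · refine mergeNbrs_adj_of_isPathEdge (o₂ := 2 + 2 * r) (ℓ := 2 * s)
      (fun i hi => theta_adj_iff.2 ⟨Or.inr (Or.inr ⟨i, hi, rfl⟩), pf_ne_pf_succ (by omega) hi⟩)
      (hfar _ _ (by omega)) hσ₀ (fun i hi hi' => ?_) h
    unfold pf thetaShift; split_ifs <;> omega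

theorem thetaShift_proj_injective {r s : ℕ} (hr : 1 ≤ r) (hs : 1 ≤ s) :
    Function.Injective fun k => proj (theta 2 (2 * r) (2 * s)) 0 (thetaShift r k) := by
  intro x y h
  rcases Nat.eq_zero_or_pos x with rfl | hx
  · rcases Nat.eq_zero_or_pos y with rfl | hy
    · rfl
    · exact thetaShift_injective r
        ((proj_eq_proj_iff (thetaShift_ne_zero_and_not_adj hr hs hy)).1 h)
  · exact (thetaShift_injective r
      ((proj_eq_proj_iff (thetaShift_ne_zero_and_not_adj hr hs hx)).1 h.symm)).symm

theorem Choosable.theta_one_of_theta_two {r s k : ℕ} (hr : 1 ≤ r) (hs : 1 ≤ s)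
    (h : Choosable (theta 2 (2 * r) (2 * s)) (2 * k) k) :
    Choosable (theta 1 (2 * r - 1) (2 * s - 1)) (2 * k) k :=
  (h.mergeNbrs 0).of_injective_hom ⟨_, theta_adj_mergeNbrs hr hs⟩
    (thetaShift_proj_injective hr hs)

theorem stmt_13 :
    (∀ (V : Type) (G : SimpleGraph V) (v : V) (m : ℕ),
        Choosable G (4 * m) (2 * m) → Choosable (mergeNbrs G v) (4 * m) (2 * m)) ∧
    (∀ m r s : ℕ, 1 ≤ r → 1 ≤ s →
        Choosable (theta 2 (2 * r) (2 * s)) (4 * m) (2 * m) →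
        Choosable (theta 1 (2 * r - 1) (2 * s - 1)) (4 * m) (2 * m)) := by
  have h4 : ∀ m : ℕ, 4 * m = 2 * (2 * m) := fun m => by ring
  refine ⟨fun V G v m hG => ?_, fun m r s hr hs hG => ?_⟩ <;> rw [h4] at hG ⊢
  exacts [hG.mergeNbrs v, hG.theta_one_of_theta_two hr hs]
end

section
/- Let P be a path v₁⋯vₙ with n odd and L a list assignment on P. Define Λ = ∩_{x∈V(P)} L(x), X̂₁ = {c ∈ L(v₁)\Λ : the smallest i with c ∉ L(vᵢ) is even}, X̂ₙ = {c ∈ L(vₙ)\Λ : the largest i with c ∉ L(vᵢ) is even}. For color sets S, T, let L⊖(S,T) be L with S removed from L(v₁) and T removed from L(vₙ). Then S_L(P) − S_{L⊖(S,T)}(P) = |X̂₁ ∩ S| + |X̂ₙ ∩ T| + |Λ ∩ (S ∪ T)|, where S_L(P) is defined via X₁ = L(v₁), Xᵢ = L(vᵢ)\Xᵢ₋₁, S_L(P) = Σᵢ|Xᵢ|. -/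
open Classical

/-- `Λ = ∩_{i=1}^n L(vᵢ)`. -/
noncomputable def lam (L : ℕ → Finset ℕ) (n : ℕ) : Finset ℕ :=
  (L 1).filter (fun c => ∀ i ∈ Finset.Icc 1 n, c ∈ L i)

/-- `X̂₁`: colours of `L(v₁) \ Λ` whose smallest index of absence is even. -/
noncomputable def hatX1 (L : ℕ → Finset ℕ) (n : ℕ) : Finset ℕ :=
  (L 1 \ lam L n).filter (fun c =>
    ∃ i ∈ Finset.Icc 1 n, c ∉ L i ∧ Even i ∧ ∀ j ∈ Finset.Icc 1 n, j < i → c ∈ L j)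

/-- `X̂ₙ`: colours of `L(vₙ) \ Λ` whose largest index of absence is even. -/
noncomputable def hatXn (L : ℕ → Finset ℕ) (n : ℕ) : Finset ℕ :=
  (L n \ lam L n).filter (fun c =>
    ∃ i ∈ Finset.Icc 1 n, c ∉ L i ∧ Even i ∧ ∀ j ∈ Finset.Icc 1 n, i < j → c ∈ L j)

/-- `L ⊖ (S,T)`: remove `S` from the first list and `T` from the last list. -/
noncomputable def Lsub (L : ℕ → Finset ℕ) (n : ℕ) (S T : Finset ℕ) : ℕ → Finset ℕ :=
  fun i => (L i \ (if i = 1 then S else ∅)) \ (if i = n then T else ∅)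

/-- the greedy state machine on a single colour pattern -/
def st (b : ℕ → Prop) : ℕ → Prop
  | 0 => False
  | i + 1 => b (i + 1) ∧ ¬ st b i

@[simp] lemma st_zero (b : ℕ → Prop) : st b 0 ↔ False := Iff.rfl
lemma st_succ (b : ℕ → Prop) (i : ℕ) : st b (i+1) ↔ (b (i+1) ∧ ¬ st b i) := Iff.rfl

lemma st_congr {b b' : ℕ → Prop} : ∀ i, (∀ j, 1 ≤ j → j ≤ i → (b j ↔ b' j)) → (st b i ↔ st b' i)
  | 0, _ => Iff.rfl
  | i+1, h => by
    rw [st_succ, st_succ, h (i+1) (by omega) le_rfl,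
      st_congr i (fun j h1 h2 => h j h1 (by omega))]

lemma st_of_not {b : ℕ → Prop} {i : ℕ} (h : ¬ b i) (hi : 1 ≤ i) : ¬ st b i := by
  obtain ⟨k, rfl⟩ : ∃ k, i = k + 1 := ⟨i - 1, by omega⟩
  simp [st_succ, h]

lemma mem_Xs (L : ℕ → Finset ℕ) (c : ℕ) : ∀ i, (c ∈ Xs L i ↔ st (fun j => c ∈ L j) i)
  | 0 => by simp [Xs]
  | i+1 => by
    simp only [Xs, Finset.mem_sdiff, st_succ]
    rw [mem_Xs L c i]

lemma st_run {b : ℕ → Prop} {j : ℕ} (hj : ¬ st b j) (i : ℕ) (hji : j ≤ i)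
    (hk : ∀ k, j < k → k ≤ i → b k) : st b i ↔ Odd (i - j) := by
  induction i, hji using Nat.le_induction with
  | base => simp [hj]
  | succ i hji ih =>
    have h1 : st b i ↔ Odd (i - j) := ih (fun k a hb => hk k a (by omega))
    have h2 : b (i+1) := hk (i+1) (by omega) le_rfl
    rw [st_succ, h1]
    simp only [h2, true_and, Nat.odd_iff]
    omega

lemma par_sum : ∀ k : ℕ, (∑ i ∈ Finset.Ioc 0 k,
    ((if Odd i then (1:ℤ) else 0) - (if Even i then 1 else 0))) = if Odd k then 1 else 0
  | 0 => by simp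
  | k+1 => by
    rw [Finset.sum_Ioc_succ_top (Nat.zero_le k), par_sum k]
    simp only [Nat.odd_iff, Nat.even_iff]
    by_cases h : k % 2 = 1
    · have ha : ¬ (k+1) % 2 = 1 := by omega
      have hb : (k+1) % 2 = 0 := by omega
      simp [h, ha, hb]
    · have ha : (k+1) % 2 = 1 := by omega
      have hb : ¬ (k+1) % 2 = 0 := by omega
      simp [h, ha, hb]

noncomputable def cnt (b : ℕ → Prop) (n : ℕ) : ℤ :=
  ∑ i ∈ Finset.Ioc 0 n, (if st b i then (1:ℤ) else 0)

lemma cnt_congr {b b' : ℕ → Prop} {n : ℕ} (h : ∀ j, 1 ≤ j → j ≤ n → (b j ↔ b' j)) :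
    cnt b n = cnt b' n := by
  unfold cnt
  refine Finset.sum_congr rfl (fun i hi => ?_)
  simp only [Finset.mem_Ioc] at hi
  rw [st_congr i (fun j h1 h2 => h j h1 (le_trans h2 hi.2))]

lemma damage_all {n : ℕ} {b b1 : ℕ → Prop} (hb1 : ¬ b1 1)
    (hagree : ∀ j, 2 ≤ j → (b1 j ↔ b j)) (hall : ∀ i, 1 ≤ i → i ≤ n → b i) :
    cnt b n - cnt b1 n = if Odd n then 1 else 0 := by
  have hsb : ∀ i, 1 ≤ i → i ≤ n → (st b i ↔ Odd i) := by
    intro i h1 h2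
    simpa using st_run (j := 0) (by simp) i (by omega)
      (fun k hk1 hk2 => hall k hk1 (by omega))
  have hsb1 : ∀ i, 1 ≤ i → i ≤ n → (st b1 i ↔ Odd (i - 1)) := by
    intro i h1 h2
    exact st_run (j := 1) (st_of_not hb1 le_rfl) i h1
      (fun k hk1 hk2 => (hagree k (by omega)).mpr (hall k (by omega) (by omega)))
  unfold cnt
  rw [← Finset.sum_sub_distrib, ← par_sum n]
  refine Finset.sum_congr rfl (fun i hi => ?_)
  simp only [Finset.mem_Ioc] at hi
  rw [if_congr (hsb i (by omega) hi.2) rfl rfl, if_congr (hsb1 i (by omega) hi.2) rfl rfl]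
  congr 1
  refine if_congr ?_ rfl rfl
  rw [Nat.odd_iff, Nat.even_iff]
  omega

lemma damage_m {n m : ℕ} {b b1 : ℕ → Prop} (hb1 : ¬ b1 1) (hb : b 1)
    (hagree : ∀ j, 2 ≤ j → (b1 j ↔ b j))
    (hm1 : 1 ≤ m) (hmn : m ≤ n) (hmb : ¬ b m)
    (hbelow : ∀ j, 1 ≤ j → j < m → b j) :
    cnt b n - cnt b1 n = if Even m then 1 else 0 := by
  have hm2 : 2 ≤ m := by
    rcases Nat.lt_or_ge m 2 with h | h
    · interval_cases m <;> tauto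
    · exact h
  have heq : ∀ i, m ≤ i → (st b i ↔ st b1 i) := by
    intro i hi
    induction i, hi using Nat.le_induction with
    | base =>
      have h1 : ¬ st b m := st_of_not hmb (by omega)
      have h2 : ¬ st b1 m := st_of_not (fun h => hmb ((hagree m hm2).mp h)) (by omega)
      tauto
    | succ i hmi ih =>
      rw [st_succ, st_succ, ih, hagree (i+1) (by omega)]
  unfold cnt
  rw [← Finset.sum_sub_distrib,
    ← Finset.sum_Ioc_consecutive _ (Nat.zero_le (m-1)) (show m - 1 ≤ n by omega)]
  have h2 : (∑ i ∈ Finset.Ioc (m-1) n,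
      ((if st b i then (1:ℤ) else 0) - if st b1 i then 1 else 0)) = 0 := by
    refine Finset.sum_eq_zero (fun i hi => ?_)
    simp only [Finset.mem_Ioc] at hi
    rw [if_congr (heq i (by omega)) rfl rfl]
    exact sub_self _
  rw [h2, add_zero]
  have h3 : ∀ i ∈ Finset.Ioc 0 (m-1),
      ((if st b i then (1:ℤ) else 0) - if st b1 i then 1 else 0)
      = (if Odd i then 1 else 0) - if Even i then 1 else 0 := by
    intro i hi
    simp only [Finset.mem_Ioc] at hi
    have hsb : st b i ↔ Odd i := by
      simpa using st_run (j := 0) (by simp) i (by omega)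
        (fun k hk1 hk2 => hbelow k hk1 (by omega))
    have hsb1 : st b1 i ↔ Odd (i - 1) :=
      st_run (j := 1) (st_of_not hb1 le_rfl) i (by omega)
        (fun k hk1 hk2 => (hagree k (by omega)).mpr (hbelow k (by omega) (by omega)))
    rw [if_congr hsb rfl rfl, if_congr hsb1 rfl rfl]
    congr 1
    refine if_congr ?_ rfl rfl
    rw [Nat.odd_iff, Nat.even_iff]
    omega
  rw [Finset.sum_congr rfl h3, par_sum]
  refine if_congr ?_ rfl rfl
  rw [Nat.odd_iff, Nat.even_iff]
  omega

lemma damage_last {n : ℕ} (hn : 1 ≤ n) {b1 b2 : ℕ → Prop} {t : Prop}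
    (hagree : ∀ j, 1 ≤ j → j < n → (b2 j ↔ b1 j))
    (hlast : b2 n ↔ (b1 n ∧ ¬ t)) :
    cnt b1 n - cnt b2 n = if st b1 n ∧ t then 1 else 0 := by
  obtain ⟨k, rfl⟩ : ∃ k, n = k + 1 := ⟨n - 1, by omega⟩
  unfold cnt
  rw [Finset.sum_Ioc_succ_top (Nat.zero_le k), Finset.sum_Ioc_succ_top (Nat.zero_le k)]
  have h1 : (∑ i ∈ Finset.Ioc 0 k, (if st b1 i then (1:ℤ) else 0))
      = ∑ i ∈ Finset.Ioc 0 k, (if st b2 i then (1:ℤ) else 0) := by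
    refine Finset.sum_congr rfl (fun i hi => ?_)
    simp only [Finset.mem_Ioc] at hi
    rw [st_congr i (fun j hj1 hj2 => (hagree j hj1 (by omega)).symm)]
  have hstk : st b2 k ↔ st b1 k :=
    st_congr k (fun j hj1 hj2 => hagree j hj1 (by omega))
  rw [h1, add_sub_add_left_eq_sub]
  have h2 : st b2 (k+1) ↔ ((b1 (k+1) ∧ ¬ t) ∧ ¬ st b1 k) := by
    rw [st_succ, hlast, hstk]
  by_cases ht : t
  · have : ¬ st b2 (k+1) := by simp [h2, ht]
    simp only [this, if_neg (fun h : False => h), if_false, sub_zero]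
    by_cases hs : st b1 (k+1) <;> simp [hs, ht]
  · have : st b2 (k+1) ↔ st b1 (k+1) := by rw [h2, st_succ]; tauto
    rw [if_congr this rfl rfl]
    simp [ht]

lemma Icc_eq_Ioc (n : ℕ) : Finset.Icc 1 n = Finset.Ioc 0 n := by
  ext x; simp; omega

lemma card_eq_sum' (A U : Finset ℕ) (h : A ⊆ U) :
    (A.card : ℤ) = ∑ c ∈ U, if c ∈ A then (1:ℤ) else 0 := by
  rw [Finset.sum_ite_mem, Finset.inter_eq_right.mpr h]
  simp

lemma SL_eq_sum (L : ℕ → Finset ℕ) (n : ℕ) (U : Finset ℕ)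
    (hU : ∀ i, 1 ≤ i → i ≤ n → L i ⊆ U) :
    (SL L n : ℤ) = ∑ c ∈ U, cnt (fun j => c ∈ L j) n := by
  unfold SL cnt
  push_cast
  rw [Icc_eq_Ioc]
  have h1 : ∀ i ∈ Finset.Ioc 0 n, ((Xs L i).card : ℤ)
      = ∑ c ∈ U, (if st (fun j => c ∈ L j) i then (1:ℤ) else 0) := by
    intro i hi
    simp only [Finset.mem_Ioc] at hi
    have hsub : Xs L i ⊆ U := by
      obtain ⟨k, rfl⟩ : ∃ k, i = k + 1 := ⟨i - 1, by omega⟩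
      exact Finset.sdiff_subset.trans (hU _ (by omega) hi.2)
    rw [card_eq_sum' _ U hsub]
    exact Finset.sum_congr rfl (fun c _ => if_congr (mem_Xs L c i) rfl rfl)
  rw [Finset.sum_congr rfl h1, Finset.sum_comm]

lemma mem_lam {L : ℕ → Finset ℕ} {n : ℕ} (hn : 1 ≤ n) {c : ℕ} :
    c ∈ lam L n ↔ ∀ i, 1 ≤ i → i ≤ n → c ∈ L i := by
  simp only [lam, Finset.mem_filter, Finset.mem_Icc]
  constructor
  · rintro ⟨h1, h2⟩ i hi1 hi2
    exact h2 i ⟨hi1, hi2⟩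
  · intro h
    exact ⟨h 1 le_rfl hn, fun i hi => h i hi.1 hi.2⟩

lemma mem_hatX1 {L : ℕ → Finset ℕ} {n c : ℕ} :
    c ∈ hatX1 L n ↔ ((c ∈ L 1 ∧ c ∉ lam L n) ∧
      ∃ i, (1 ≤ i ∧ i ≤ n) ∧ c ∉ L i ∧ Even i ∧ ∀ j, 1 ≤ j → j ≤ n → j < i → c ∈ L j) := by
  simp only [hatX1, Finset.mem_filter, Finset.mem_sdiff, Finset.mem_Icc]
  constructor
  · rintro ⟨h1, i, hi, h2⟩
    exact ⟨h1, i, hi, h2.1, h2.2.1, fun j hj1 hj2 => h2.2.2 j ⟨hj1, hj2⟩⟩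
  · rintro ⟨h1, i, hi, h2, h3, h4⟩
    exact ⟨h1, i, hi, h2, h3, fun j hj => h4 j hj.1 hj.2⟩

lemma mem_hatXn {L : ℕ → Finset ℕ} {n c : ℕ} :
    c ∈ hatXn L n ↔ ((c ∈ L n ∧ c ∉ lam L n) ∧
      ∃ i, (1 ≤ i ∧ i ≤ n) ∧ c ∉ L i ∧ Even i ∧ ∀ j, 1 ≤ j → j ≤ n → i < j → c ∈ L j) := by
  simp only [hatXn, Finset.mem_filter, Finset.mem_sdiff, Finset.mem_Icc]
  constructor
  · rintro ⟨h1, i, hi, h2⟩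
    exact ⟨h1, i, hi, h2.1, h2.2.1, fun j hj1 hj2 => h2.2.2 j ⟨hj1, hj2⟩⟩
  · rintro ⟨h1, i, hi, h2, h3, h4⟩
    exact ⟨h1, i, hi, h2, h3, fun j hj => h4 j hj.1 hj.2⟩

lemma key (n : ℕ) (hn : Odd n) (L : ℕ → Finset ℕ) (S T : Finset ℕ) (c : ℕ) :
    cnt (fun j => c ∈ L j) n - cnt (fun j => c ∈ Lsub L n S T j) n
      = (if c ∈ hatX1 L n ∩ S then (1:ℤ) else 0)
        + (if c ∈ hatXn L n ∩ T then 1 else 0)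
        + (if c ∈ lam L n ∩ (S ∪ T) then 1 else 0) := by
  have hn1 : 1 ≤ n := hn.pos
  have hnodd : n % 2 = 1 := Nat.odd_iff.mp hn
  have hmemLsub : ∀ j, c ∈ Lsub L n S T j ↔
      (c ∈ L j ∧ ¬(j = 1 ∧ c ∈ S) ∧ ¬(j = n ∧ c ∈ T)) := by
    intro j
    simp only [Lsub, Finset.mem_sdiff]
    constructor
    · rintro ⟨⟨hL, hS⟩, hT⟩
      refine ⟨hL, ?_, ?_⟩
      · rintro ⟨rfl, hc⟩; simp at hS; exact hS hc
      · rintro ⟨rfl, hc⟩; simp at hT; exact hT hc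
    · rintro ⟨hL, hS, hT⟩
      refine ⟨⟨hL, ?_⟩, ?_⟩
      · by_cases h : j = 1
        · simp [h]; exact fun hc => hS ⟨h, hc⟩
        · simp [h]
      · by_cases h : j = n
        · simp [h]; exact fun hc => hT ⟨h, hc⟩
        · simp [h]
  set b : ℕ → Prop := fun j => c ∈ L j with hbdef
  set b1 : ℕ → Prop := fun j => c ∈ L j ∧ ¬(j = 1 ∧ c ∈ S) with hb1def
  set b2 : ℕ → Prop := fun j => c ∈ Lsub L n S T j with hb2def
  have hb2iff : ∀ j, b2 j ↔ (b1 j ∧ ¬(j = n ∧ c ∈ T)) := by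
    intro j
    show c ∈ Lsub L n S T j ↔ (c ∈ L j ∧ ¬(j = 1 ∧ c ∈ S)) ∧ ¬(j = n ∧ c ∈ T)
    rw [hmemLsub j]
    tauto
  have hagree2 : ∀ j, 2 ≤ j → (b1 j ↔ b j) := by
    intro j hj
    have : j ≠ 1 := by omega
    simp [hb1def, hbdef, this]
  have hb1b : ∀ j, b1 j → b j := fun j h => h.1
  have hsplit : cnt b n - cnt b2 n = (cnt b n - cnt b1 n) + (cnt b1 n - cnt b2 n) := by ring
  have hpart2 : cnt b1 n - cnt b2 n = if st b1 n ∧ c ∈ T then 1 else 0 := by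
    have h := damage_last (t := (c ∈ T)) hn1 (b1 := b1) (b2 := b2)
      (fun j hj1 hj2 => by
        rw [hb2iff j]
        have hjn : j ≠ n := by omega
        simp [hjn])
      (by rw [hb2iff n]; simp)
    convert h using 2
  rw [hsplit]
  by_cases hlamc : c ∈ lam L n
  · -- Λ case
    have hall : ∀ i, 1 ≤ i → i ≤ n → b i := (mem_lam hn1).mp hlamc
    have hnot1 : c ∉ hatX1 L n := fun h => (mem_hatX1.mp h).1.2 hlamc
    have hnotn : c ∉ hatXn L n := fun h => (mem_hatXn.mp h).1.2 hlamc
    rw [if_neg (fun h => hnot1 (Finset.mem_inter.mp h).1),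
        if_neg (fun h => hnotn (Finset.mem_inter.mp h).1)]
    by_cases hcS : c ∈ S
    · have hb11 : ¬ b1 1 := by simp [hb1def, hcS]
      have hpart1 : cnt b n - cnt b1 n = 1 := by
        rw [damage_all hb11 hagree2 hall, if_pos hn]
      have hstb1n : ¬ st b1 n := by
        have hr : st b1 n ↔ Odd (n - 1) :=
          st_run (st_of_not hb11 le_rfl) n hn1
            (fun k hk1 hk2 => (hagree2 k (by omega)).mpr (hall k (by omega) hk2))
        rw [hr, Nat.odd_iff]
        omega
      have hmem : c ∈ lam L n ∩ (S ∪ T) :=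
        Finset.mem_inter.mpr ⟨hlamc, Finset.mem_union_left _ hcS⟩
      rw [if_pos hmem, hpart1, hpart2, if_neg (fun h => hstb1n h.1)]
      ring
    · have hpart1 : cnt b n = cnt b1 n := by
        refine cnt_congr (fun j h1 h2 => ?_)
        simp [hb1def, hbdef, hcS]
      have hstb1n : st b1 n := by
        have hr : st b1 n ↔ Odd (n - 0) :=
          st_run (j := 0) (by simp) n (Nat.zero_le n)
            (fun k hk1 hk2 => by
              rw [hb1def]
              exact ⟨hall k hk1 hk2, fun h => hcS h.2⟩)
        rw [hr]
        simpa using hn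
      rw [hpart2, hpart1, sub_self]
      by_cases hcT : c ∈ T
      · have hmem : c ∈ lam L n ∩ (S ∪ T) :=
          Finset.mem_inter.mpr ⟨hlamc, Finset.mem_union_right _ hcT⟩
        rw [if_pos hmem, if_pos ⟨hstb1n, hcT⟩]
        ring
      · have hmem : c ∉ lam L n ∩ (S ∪ T) := by
          rw [Finset.mem_inter]
          rintro ⟨-, h⟩
          rcases Finset.mem_union.mp h with h | h <;> tauto
        rw [if_neg hmem, if_neg (fun h => hcT h.2)]
        ring
  · -- c ∉ Λ
    have hex : ∃ i, (1 ≤ i ∧ i ≤ n) ∧ ¬ b i := by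
      by_contra h
      push_neg at h
      exact hlamc ((mem_lam hn1).mpr (fun i h1 h2 => h i ⟨h1, h2⟩))
    rw [if_neg (fun h => hlamc (Finset.mem_inter.mp h).1), add_zero]
    -- Part 2 : st b1 n ↔ c ∈ hatXn L n
    have hF1ne : ((Finset.Icc 1 n).filter (fun i => ¬ b1 i)).Nonempty := by
      obtain ⟨i, hi, hbi⟩ := hex
      exact ⟨i, Finset.mem_filter.mpr ⟨Finset.mem_Icc.mpr hi, fun h => hbi (hb1b i h)⟩⟩
    set M := ((Finset.Icc 1 n).filter (fun i => ¬ b1 i)).max' hF1ne with hMdef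
    have hMmem := Finset.max'_mem _ hF1ne
    rw [← hMdef] at hMmem
    have hMIcc : 1 ≤ M ∧ M ≤ n := Finset.mem_Icc.mp (Finset.mem_filter.mp hMmem).1
    have hMb1 : ¬ b1 M := (Finset.mem_filter.mp hMmem).2
    have hMabove : ∀ k, M < k → k ≤ n → b1 k := by
      intro k hk1 hk2
      by_contra hk
      have hmem : k ∈ (Finset.Icc 1 n).filter (fun i => ¬ b1 i) :=
        Finset.mem_filter.mpr ⟨Finset.mem_Icc.mpr ⟨by omega, hk2⟩, hk⟩
      have := Finset.le_max' _ k hmem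
      rw [← hMdef] at this
      omega
    have hrunM : st b1 n ↔ Odd (n - M) :=
      st_run (st_of_not hMb1 hMIcc.1) n hMIcc.2 hMabove
    have hstb1n : st b1 n ↔ c ∈ hatXn L n := by
      rw [hrunM]
      constructor
      · intro hodd
        have hME : M % 2 = 0 := by
          rw [Nat.odd_iff] at hodd
          omega
        have hM2 : 2 ≤ M := by omega
        have hMb : ¬ b M := fun h => hMb1 ((hagree2 M hM2).mpr h)
        have hMn : M < n := by omega
        have hbn : b n := (hagree2 n (by omega)).mp (hMabove n hMn le_rfl)
        refine mem_hatXn.mpr ⟨⟨hbn, hlamc⟩, M, ⟨hMIcc.1, hMIcc.2⟩, hMb,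
          Nat.even_iff.mpr hME, fun j hj1 hj2 hj3 => ?_⟩
        exact (hagree2 j (by omega)).mp (hMabove j hj3 hj2)
      · intro hmem
        obtain ⟨⟨hbn, -⟩, i, hi, hbi, hieven, habove⟩ := mem_hatXn.mp hmem
        have hi2 : 2 ≤ i := by
          have := Nat.even_iff.mp hieven
          omega
        have hib1 : ¬ b1 i := fun h => hbi (hb1b i h)
        have hiM : i ≤ M := by
          have hmem' : i ∈ (Finset.Icc 1 n).filter (fun j => ¬ b1 j) :=
            Finset.mem_filter.mpr ⟨Finset.mem_Icc.mpr hi, hib1⟩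
          have := Finset.le_max' _ i hmem'
          rw [← hMdef] at this
          exact this
        have hMi : M = i := by
          by_contra h
          have hiltM : i < M := by omega
          have hbM : b M := habove M hMIcc.1 hMIcc.2 hiltM
          exact hMb1 ((hagree2 M (by omega)).mpr hbM)
        rw [Nat.odd_iff]
        have := Nat.even_iff.mp hieven
        omega
    -- Part 1
    by_cases hCS : c ∈ S ∧ c ∈ L 1
    · have hFne : ((Finset.Icc 1 n).filter (fun i => ¬ b i)).Nonempty := by
        obtain ⟨i, hi, hbi⟩ := hex
        exact ⟨i, Finset.mem_filter.mpr ⟨Finset.mem_Icc.mpr hi, hbi⟩⟩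
      set m := ((Finset.Icc 1 n).filter (fun i => ¬ b i)).min' hFne with hmdef
      have hmmem := Finset.min'_mem _ hFne
      rw [← hmdef] at hmmem
      have hmIcc : 1 ≤ m ∧ m ≤ n := Finset.mem_Icc.mp (Finset.mem_filter.mp hmmem).1
      have hmb : ¬ b m := (Finset.mem_filter.mp hmmem).2
      have hbelow : ∀ j, 1 ≤ j → j < m → b j := by
        intro j h1 h2
        by_contra hj
        have hmem : j ∈ (Finset.Icc 1 n).filter (fun i => ¬ b i) :=
          Finset.mem_filter.mpr ⟨Finset.mem_Icc.mpr ⟨h1, by omega⟩, hj⟩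
        have := Finset.min'_le _ j hmem
        rw [← hmdef] at this
        omega
      have hb11 : ¬ b1 1 := by simp [hb1def, hCS.1]
      have hpart1 : cnt b n - cnt b1 n = if Even m then 1 else 0 :=
        damage_m hb11 hCS.2 hagree2 hmIcc.1 hmIcc.2 hmb hbelow
      have hiff : Even m ↔ c ∈ hatX1 L n := by
        constructor
        · intro hEm
          exact mem_hatX1.mpr ⟨⟨hCS.2, hlamc⟩, m, ⟨hmIcc.1, hmIcc.2⟩, hmb, hEm,
            fun j hj1 hj2 hj3 => hbelow j hj1 hj3⟩
        · intro hmem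
          obtain ⟨-, i, hi, hbi, hieven, hbel⟩ := mem_hatX1.mp hmem
          have him : m ≤ i := by
            have hmem' : i ∈ (Finset.Icc 1 n).filter (fun j => ¬ b j) :=
              Finset.mem_filter.mpr ⟨Finset.mem_Icc.mpr hi, hbi⟩
            have := Finset.min'_le _ i hmem'
            rw [← hmdef] at this
            exact this
          have : m = i := by
            by_contra h
            exact hmb (hbel m hmIcc.1 hmIcc.2 (by omega))
          rw [this]
          exact hieven
      rw [hpart1, hpart2]
      have hres1 : (if Even m then (1:ℤ) else 0) = if c ∈ hatX1 L n ∩ S then 1 else 0 := by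
        by_cases h : Even m
        · rw [if_pos h, if_pos (Finset.mem_inter.mpr ⟨hiff.mp h, hCS.1⟩)]
        · rw [if_neg h, if_neg (fun hm => h (hiff.mpr (Finset.mem_inter.mp hm).1))]
      have hres2 : (if st b1 n ∧ c ∈ T then (1:ℤ) else 0)
          = if c ∈ hatXn L n ∩ T then 1 else 0 := by
        by_cases h : st b1 n ∧ c ∈ T
        · rw [if_pos h, if_pos (Finset.mem_inter.mpr ⟨hstb1n.mp h.1, h.2⟩)]
        · rw [if_neg h, if_neg (fun hm => h ⟨hstb1n.mpr (Finset.mem_inter.mp hm).1,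
            (Finset.mem_inter.mp hm).2⟩)]
      rw [hres1, hres2]
    · have hpart1 : cnt b n = cnt b1 n := by
        refine cnt_congr (fun j h1 h2 => ?_)
        by_cases hj : j = 1
        · subst hj
          rw [hb1def, hbdef]
          simp only
          constructor
          · intro h
            exact ⟨h, fun hh => hCS ⟨hh.2, h⟩⟩
          · exact fun h => h.1
        · exact (hagree2 j (by omega)).symm
      have hnotin : c ∉ hatX1 L n ∩ S := by
        intro h
        obtain ⟨h1, h2⟩ := Finset.mem_inter.mp h
        exact hCS ⟨h2, (mem_hatX1.mp h1).1.1⟩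
      rw [hpart1, sub_self, if_neg hnotin, hpart2]
      have hres2 : (if st b1 n ∧ c ∈ T then (1:ℤ) else 0)
          = if c ∈ hatXn L n ∩ T then 1 else 0 := by
        by_cases h : st b1 n ∧ c ∈ T
        · rw [if_pos h, if_pos (Finset.mem_inter.mpr ⟨hstb1n.mp h.1, h.2⟩)]
        · rw [if_neg h, if_neg (fun hm => h ⟨hstb1n.mpr (Finset.mem_inter.mp hm).1,
            (Finset.mem_inter.mp hm).2⟩)]
      rw [hres2]

theorem stmt_14 (n : ℕ) (hn : Odd n) (L : ℕ → Finset ℕ) (S T : Finset ℕ) :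
    (SL L n : ℤ) - (SL (Lsub L n S T) n : ℤ)
      = ((hatX1 L n ∩ S).card : ℤ) + ((hatXn L n ∩ T).card : ℤ)
        + ((lam L n ∩ (S ∪ T)).card : ℤ) := by
  have hn1 : 1 ≤ n := hn.pos
  set U : Finset ℕ := (Finset.Icc 1 n).biUnion L with hUdef
  have hLU : ∀ i, 1 ≤ i → i ≤ n → L i ⊆ U := by
    intro i h1 h2
    exact Finset.subset_biUnion_of_mem L (Finset.mem_Icc.mpr ⟨h1, h2⟩)
  have hLsubU : ∀ i, 1 ≤ i → i ≤ n → Lsub L n S T i ⊆ U := by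
    intro i h1 h2
    refine subset_trans ?_ (hLU i h1 h2)
    exact Finset.sdiff_subset.trans Finset.sdiff_subset
  have hlamL1 : lam L n ⊆ L 1 := by
    intro c hc
    simp only [lam, Finset.mem_filter] at hc
    exact hc.1
  have hhat1L1 : hatX1 L n ⊆ L 1 := by
    intro c hc
    simp only [hatX1, Finset.mem_filter, Finset.mem_sdiff] at hc
    exact hc.1.1
  have hhatnLn : hatXn L n ⊆ L n := by
    intro c hc
    simp only [hatXn, Finset.mem_filter, Finset.mem_sdiff] at hc
    exact hc.1.1
  have h1 := SL_eq_sum L n U hLU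
  have h2 := SL_eq_sum (Lsub L n S T) n U hLsubU
  have hs1 : hatX1 L n ∩ S ⊆ U :=
    Finset.inter_subset_left.trans (hhat1L1.trans (hLU 1 le_rfl hn1))
  have hs2 : hatXn L n ∩ T ⊆ U :=
    Finset.inter_subset_left.trans (hhatnLn.trans (hLU n hn1 le_rfl))
  have hs3 : lam L n ∩ (S ∪ T) ⊆ U :=
    Finset.inter_subset_left.trans (hlamL1.trans (hLU 1 le_rfl hn1))
  rw [h1, h2, card_eq_sum' _ U hs1, card_eq_sum' _ U hs2, card_eq_sum' _ U hs3,
    ← Finset.sum_sub_distrib, ← Finset.sum_add_distrib, ← Finset.sum_add_distrib]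
  exact Finset.sum_congr rfl (fun c _ => key n hn L S T c)
end
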